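/- arXiv:0907.3316 — 9 statements merged into one kernel-verified Lean document; each statement's English description precedes it below -/
import Mathlib

section
/- Let K be an integral domain whose group of units K× is infinite, and let (K, K×) be the representation in which K× acts on the K-module K by multiplication. Then an element u ∈ KF is an identity of the representation (K, K×) if and only if u is an identity of every representation (V,G) over K in which the action operators commute, i.e., (v∘g)∘h = (v∘h)∘g for all v ∈ V and g, h ∈ G. (The variety ω𝔄 is generated by (K, K×).) -/
/-!
If the operators of a representation `(V, G)` commute, the action of `KF` on `V` factors through
the group algebra of the abelianisation `ℤ^(ℕ)` of `F` (exponent sums of words), so `u` is an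
identity of `ω𝔄` as soon as its image in `K[ℤ^(ℕ)]` vanishes.

For an identity `u` of `(K, K×)` that image is killed by every character `ℤ^(ℕ) → K×`. As `K×`
is infinite and a domain has only finitely many `n`-th roots of unity, these characters separate
the points of `ℤ^(ℕ)`. Evaluation at a point is a character of the group of characters, so
Dedekind's independence of characters forces the image of `u` to be zero.
-/

open MonoidAlgebra

theorem Units.exists_zpow_ne_one (K : Type*) [CommRing K] [IsDomain K] [Infinite Kˣ]
    {n : ℤ} (hn : n ≠ 0) : ∃ t : Kˣ, t ^ n ≠ 1 := by
  have : NeZero n.natAbs := ⟨Int.natAbs_ne_zero.2 hn⟩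
  have hfin : Finite (rootsOfUnity n.natAbs K) := inferInstance
  obtain ⟨t, ht⟩ := (Set.finite_coe_iff.1 hfin).infinite_compl.nonempty
  exact ⟨t, fun h => ht ((mem_rootsOfUnity _ _).2 (pow_natAbs_eq_one.2 h))⟩

theorem Finsupp.exists_monoidHom_units_apply_ne (K : Type*) [CommRing K] [IsDomain K]
    [Infinite Kˣ] {α : Type*} {a b : α →₀ ℤ} (hab : a ≠ b) :
    ∃ χ : Multiplicative (α →₀ ℤ) →* Kˣ, χ (.ofAdd a) ≠ χ (.ofAdd b) := by
  obtain ⟨i, hi⟩ := DFunLike.ne_iff.1 hab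
  obtain ⟨t, ht⟩ := Units.exists_zpow_ne_one K (sub_ne_zero.2 hi)
  refine ⟨(zpowersHom Kˣ t).comp (AddMonoidHom.toMultiplicative (Finsupp.applyAddHom i)), ?_⟩
  intro h
  apply ht
  rw [zpow_sub, show t ^ a i = t ^ b i from h, mul_inv_cancel]

namespace FreeGroup

variable {α : Type*}

variable (α) in
noncomputable def exponentSums : FreeGroup α →* Multiplicative (α →₀ ℤ) :=
  FreeGroup.lift fun i => .ofAdd (Finsupp.single i 1)

theorem exists_comp_exponentSums {A : Type*} [CommGroup A] (f : FreeGroup α →* A) :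
    ∃ g : Multiplicative (α →₀ ℤ) →* A, g.comp (exponentSums α) = f :=
  ⟨AddMonoidHom.toMultiplicativeLeft
      (Finsupp.liftAddHom fun i => zmultiplesHom (Additive A) (.ofMul (f (of i)))),
    ext_hom _ _ fun i => by simp [exponentSums]⟩

end FreeGroup

namespace MonoidAlgebra

open FreeGroup (exponentSums exists_comp_exponentSums)

variable {α : Type*}

theorem eq_zero_of_forall_lift_eq_zero {K M : Type*} [CommRing K] [IsDomain K]
    [Monoid M] (hsep : ∀ a b : M, a ≠ b → ∃ χ : M →* Kˣ, χ a ≠ χ b) {w : MonoidAlgebra K M}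
    (h : ∀ χ : M →* Kˣ, lift K K M ((Units.coeHom K).comp χ) w = 0) : w = 0 := by
  let ev : M → (M →* Kˣ) →* K := fun m => (Units.coeHom K).comp (MonoidHom.eval m)
  have hev : Function.Injective ev := fun a b hab => by
    by_contra hne
    obtain ⟨χ, hχ⟩ := hsep a b hne
    exact hχ (Units.ext (DFunLike.congr_fun hab χ))
  have hcoeff : w.coeff = 0 := by
    refine linearIndependent_iff.1 ((linearIndependent_monoidHom (M →* Kˣ) K).comp ev hev) _ ?_
    ext χ
    simpa [Finsupp.linearCombination_apply, lift_apply, Finsupp.sum, ev] using h χ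
  ext m
  simp [hcoeff]

theorem lift_mapDomain {K A M N : Type*} [CommSemiring K] [Semiring A]
    [Algebra K A] [Monoid M] [Monoid N] (f : N →* A) (g : M →* N) (u : MonoidAlgebra K M) :
    lift K A N f (mapDomain g u) = lift K A M (f.comp g) u := by
  change ((lift K A N f).comp (mapDomainAlgHom K K g)) u = _
  congr 1
  ext
  simp [mapDomain_single]

theorem mapDomain_exponentSums_eq_zero {K : Type*} [CommRing K] [IsDomain K] [Infinite Kˣ]
    {u : MonoidAlgebra K (FreeGroup α)}
    (h : ∀ β : FreeGroup α →* Kˣ, lift K K _ ((Units.coeHom K).comp β) u = 0) :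
    mapDomain (exponentSums α) u = 0 := by
  refine eq_zero_of_forall_lift_eq_zero
    (fun a b hab => Finsupp.exists_monoidHom_units_apply_ne K hab) fun χ => ?_
  simpa [lift_mapDomain, MonoidHom.comp_assoc] using h (χ.comp (exponentSums α))

open scoped IsMulCommutative in
theorem exists_ringHom_comp_mapDomainRingHom_exponentSums {K R : Type*} [CommSemiring K]
    [Semiring R] (Φ : MonoidAlgebra K (FreeGroup α) →+* R)
    (hΦ : ∀ x y, Commute (Φ (of K _ x)) (Φ (of K _ y))) :
    ∃ Ψ : MonoidAlgebra K (Multiplicative (α →₀ ℤ)) →+* R,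
      Ψ.comp (mapDomainRingHom K (exponentSums α)) = Φ := by
  let ψ : FreeGroup α →* Rˣ := ((Φ : MonoidAlgebra K (FreeGroup α) →* R).comp (of K _)).toHomUnits
  have : IsMulCommutative ψ.range := isMulCommutative_iff.2 <| by
    rintro ⟨_, x, rfl⟩ ⟨_, y, rfl⟩
    exact Subtype.ext (Units.ext (hΦ x y).eq)
  obtain ⟨g, hg⟩ := exists_comp_exponentSums ψ.rangeRestrict
  let ρ : Multiplicative (α →₀ ℤ) →* R := (Units.coeHom R).comp (ψ.range.subtype.comp g)
  have hcomm : ∀ c y, Commute (Φ.comp singleOneRingHom c) (ρ y) := by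
    intro c y
    obtain ⟨x, hx⟩ := (g y).2
    have hρ : ρ y = Φ (of K _ x) := by simp [ρ, ← hx, ψ]
    rw [hρ]
    exact Commute.map (single_one_comm c (of K _ x)) Φ
  refine ⟨liftNCRingHom (Φ.comp singleOneRingHom) ρ hcomm,
    ringHom_ext (fun c => by simp) (fun x => ?_)⟩
  have hx : ρ (exponentSums α x) = Φ (of K _ x) := by
    change ((g.comp (exponentSums α) x : ψ.range) : Rˣ).val = _
    rw [hg]
    rfl
  simp [mapDomain_single, hx, ← one_def]

theorem smul_eq_zero_of_mapDomain_exponentSums_eq_zero {K G V : Type*} [CommSemiring K]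
    [Group G] [AddCommMonoid V] [Module (MonoidAlgebra K G) V]
    (hcomm : ∀ (g h : G) (v : V), of K G g • of K G h • v = of K G h • of K G g • v)
    (β : FreeGroup α →* G) {u : MonoidAlgebra K (FreeGroup α)}
    (hu : mapDomain (exponentSums α) u = 0) (v : V) : mapDomain β u • v = 0 := by
  obtain ⟨Ψ, hΨ⟩ := exists_ringHom_comp_mapDomainRingHom_exponentSums
    ((Module.toAddMonoidEnd (MonoidAlgebra K G) V).comp (mapDomainRingHom K β)) fun x y => by
      ext w
      simp only [RingHom.comp_apply, mapDomainRingHom_apply, of_apply, mapDomain_single,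
        AddMonoid.End.coe_mul, Function.comp_apply]
      exact hcomm (β x) (β y) w
  have hv : Ψ (mapDomain (exponentSums α) u) v = mapDomain β u • v :=
    DFunLike.congr_fun congr($hΨ u) v
  rwa [hu, map_zero, eq_comm] at hv

end MonoidAlgebra

/-- over an integral domain `K` with infinite unit group `K×`, an element
`u ∈ KF` is an identity of the representation `(K, K×)` (units acting on `K` by
multiplication) iff `u` is an identity of every representation `(V, G)` whose action
operators pairwise commute; i.e. the variety `ω𝔄` is generated by `(K, K×)`. -/
theorem omegaA_generated_by_units_representation
    (K : Type) [CommRing K] [IsDomain K] [Infinite Kˣ]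
    (u : MonoidAlgebra K (FreeGroup ℕ)) :
    (∀ β : FreeGroup ℕ →* Kˣ, ∀ v : K,
        (MonoidAlgebra.lift K K (FreeGroup ℕ) ((Units.coeHom K).comp β)) u * v = 0) ↔
    (∀ (G : Type) [Group G] (V : Type) [AddCommGroup V] [Module (MonoidAlgebra K G) V],
        (∀ (g h : G) (v : V),
            MonoidAlgebra.of K G g • (MonoidAlgebra.of K G h • v) =
              MonoidAlgebra.of K G h • (MonoidAlgebra.of K G g • v)) →
        ∀ β : FreeGroup ℕ →* G, ∀ v : V, (MonoidAlgebra.mapDomainAlgHom K K β u) • v = 0) := by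
  constructor
  · intro h G _ V _ _ hcomm β v
    have hu : mapDomain (FreeGroup.exponentSums ℕ) u = 0 :=
      mapDomain_exponentSums_eq_zero fun β => by simpa using h β 1
    exact smul_eq_zero_of_mapDomain_exponentSums_eq_zero hcomm β hu v
  · intro h β v
    let _ : Module (MonoidAlgebra K Kˣ) K :=
      Module.compHom K (lift K K Kˣ (Units.coeHom K)).toRingHom
    have hcomm : ∀ (g g' : Kˣ) (x : K), of K Kˣ g • of K Kˣ g' • x = of K Kˣ g' • of K Kˣ g • x :=
      fun _ _ x => show _ * (_ * x) = _ * (_ * x) by ring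
    have hv := h Kˣ K hcomm β v
    change lift K K Kˣ (Units.coeHom K) (mapDomain β u) * v = 0 at hv
    rwa [lift_mapDomain] at hv
end

section
/- Let K be an infinite field and n ≥ 1. Consider the natural representation (Kⁿ, UTₙ(K)) of the group UTₙ(K) of upper unitriangular n×n matrices over K acting on the module Kⁿ by matrix multiplication. Then an element u ∈ KF is an identity of the representation (Kⁿ, UTₙ(K)) if and only if u belongs to (Δ_F)ⁿ, the n-th power of the augmentation ideal of KF. (The variety 𝔖ⁿ, defined by the identity x∘(y₁−1)⋯(yₙ−1) ≡ 0, is generated by (Kⁿ, UTₙ(K)).) -/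
/-!
Under a representation by unitriangular matrices every `g - 1` acts by a strictly upper
triangular matrix, so the augmentation ideal `Δ` is sent into the nilpotent ideal of strictly
upper triangular matrices and `Δⁿ` acts as zero.

Conversely, modulo `Δⁿ` every element of `KF` is a linear combination of the products
`(x_{i₁} - 1) ⋯ (x_{i_k} - 1)` with `k < n`, because `gh - 1 ≡ (g - 1) + (h - 1)` modulo
`Δ²`. Send `x_i` to the generic unitriangular matrix `1 + ∑ₚ t_{i,p} E_{p,p+1}`: then `x_i - 1`
is a weighted shift, and the first coordinate of the image of such a product applied to the
all-ones vector is the monomial `t_{i₁,0} t_{i₂,1} ⋯ t_{i_k,k-1}`. Distinct words give distinct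
monomials, and a polynomial vanishing everywhere on an infinite field is zero, so an identity
has no component outside `Δⁿ`.
-/

open MonoidAlgebra
open scoped Matrix

section UpperFiltration

variable (R : Type*) [CommRing R] (n : ℕ)

def upperFiltration (k : ℕ) : Submodule R (Matrix (Fin n) (Fin n) R) where
  carrier := {M | ∀ i j : Fin n, (j : ℕ) < i + k → M i j = 0}
  add_mem' hA hB i j h := by simp [hA i j h, hB i j h]
  zero_mem' _ _ _ := rfl
  smul_mem' c M hM i j h := by simp [hM i j h]

variable {R n}

theorem mul_mem_upperFiltration {a b : ℕ} {A B : Matrix (Fin n) (Fin n) R}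
    (hA : A ∈ upperFiltration R n a) (hB : B ∈ upperFiltration R n b) :
    A * B ∈ upperFiltration R n (a + b) := by
  intro i j h
  rw [Matrix.mul_apply]
  refine Finset.sum_eq_zero fun k _ => ?_
  rcases lt_or_ge (k : ℕ) (i + a) with hk | hk
  · rw [hA i k hk, zero_mul]
  · rw [hB k j (by omega), mul_zero]

theorem upperFiltration_antitone : Antitone (upperFiltration R n) :=
  fun _ _ hkl _ hM i j h => hM i j (by omega)

theorem one_mem_upperFiltration_zero : (1 : Matrix (Fin n) (Fin n) R) ∈ upperFiltration R n 0 :=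
  fun _ _ h => Matrix.one_apply_ne (Fin.ne_of_gt h)

theorem upperFiltration_one_pow_le (k : ℕ) :
    upperFiltration R n 1 ^ k ≤ upperFiltration R n k := by
  induction k with
  | zero => exact Submodule.one_le.mpr one_mem_upperFiltration_zero
  | succ k ih =>
    rw [pow_succ]
    exact Submodule.mul_le.mpr fun A hA B hB => mul_mem_upperFiltration (ih hA) hB

theorem eq_zero_of_mem_upperFiltration {k : ℕ} (hk : n ≤ k) {M : Matrix (Fin n) (Fin n) R}
    (hM : M ∈ upperFiltration R n k) : M = 0 :=
  Matrix.ext fun i j => hM i j (by omega)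

theorem pow_eq_zero_of_mem_upperFiltration_one {N : Matrix (Fin n) (Fin n) R}
    (hN : N ∈ upperFiltration R n 1) : N ^ n = 0 :=
  eq_zero_of_mem_upperFiltration le_rfl
    (upperFiltration_one_pow_le n (Submodule.pow_mem_pow _ hN n))

theorem sub_one_mem_upperFiltration_one_iff {M : Matrix (Fin n) (Fin n) R} :
    M - 1 ∈ upperFiltration R n 1 ↔
      (∀ i j : Fin n, j < i → M i j = 0) ∧ ∀ i, M i i = 1 := by
  constructor
  · intro h
    refine ⟨fun i j hij => ?_, fun i => ?_⟩
    · simpa [Matrix.one_apply_ne (Fin.ne_of_gt hij)] using h i j (by omega)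
    · simpa [sub_eq_zero] using h i i (by omega)
  · rintro ⟨hlower, hdiag⟩ i j h
    rcases (Nat.lt_succ_iff.mp h).lt_or_eq with hlt | heq
    · simp [Matrix.one_apply_ne (Fin.ne_of_gt hlt), hlower i j hlt]
    · obtain rfl := Fin.ext heq
      simp [hdiag]

variable (R n) in
def unitriangularGroup : Subgroup (Matrix (Fin n) (Fin n) R)ˣ where
  carrier := {A | (A : Matrix (Fin n) (Fin n) R) - 1 ∈ upperFiltration R n 1}
  one_mem' := by simp
  mul_mem' {A B} hA hB := by
    have h : (↑(A * B) : Matrix (Fin n) (Fin n) R) - 1 =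
        (↑A - 1) * (↑B - 1) + (↑A - 1) + (↑B - 1) := by
      rw [Units.val_mul]; noncomm_ring
    show _ ∈ upperFiltration R n 1
    rw [h]
    exact add_mem (add_mem (upperFiltration_antitone (by norm_num)
      (mul_mem_upperFiltration hA hB)) hA) hB
  inv_mem' {A} hA := by
    set M : Matrix (Fin n) (Fin n) R := ↑A
    set M' : Matrix (Fin n) (Fin n) R := ↑A⁻¹
    have hN : 1 - M ∈ upperFiltration R n 1 := by
      simpa using neg_mem (show M - 1 ∈ upperFiltration R n 1 from hA)
    have hinv : M' = ∑ k ∈ Finset.range n, (1 - M) ^ k := by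
      refine Units.inv_eq_of_mul_eq_one_right ?_
      simpa [pow_eq_zero_of_mem_upperFiltration_one hN] using mul_neg_geom_sum (1 - M) n
    have hupper : M' ∈ upperFiltration R n 0 := by
      rw [hinv]
      exact Submodule.sum_mem _ fun k _ => upperFiltration_antitone (Nat.zero_le k)
        (upperFiltration_one_pow_le k (Submodule.pow_mem_pow _ hN k))
    have h : M' - 1 = M' * (1 - M) := by
      rw [mul_sub, mul_one, Units.inv_mul]
    show M' - 1 ∈ upperFiltration R n 1
    simpa [h] using mul_mem_upperFiltration hupper hN

theorem mem_unitriangularGroup {A : (Matrix (Fin n) (Fin n) R)ˣ} :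
    A ∈ unitriangularGroup R n ↔ (A : Matrix (Fin n) (Fin n) R) - 1 ∈ upperFiltration R n 1 :=
  Iff.rfl

end UpperFiltration

section Augmentation

variable (R G : Type*) [CommRing R] [Monoid G]

noncomputable def augmentationIdeal : Submodule R (MonoidAlgebra R G) :=
  (RingHom.ker ((MonoidAlgebra.lift R R G) (1 : G →* R))).restrictScalars R

variable {R G}

theorem mem_augmentationIdeal {a : MonoidAlgebra R G} :
    a ∈ augmentationIdeal R G ↔ MonoidAlgebra.lift R R G 1 a = 0 :=
  Iff.rfl

theorem sub_augmentation_smul_one_mem (a : MonoidAlgebra R G) :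
    a - MonoidAlgebra.lift R R G 1 a • 1 ∈ augmentationIdeal R G := by
  simp [mem_augmentationIdeal]

theorem of_sub_one_mem_augmentationIdeal (g : G) :
    of R G g - 1 ∈ augmentationIdeal R G := by
  simp [mem_augmentationIdeal]

theorem of_mul_sub_one (g h : G) :
    of R G (g * h) - 1 = (of R G g - 1) + (of R G h - 1) + (of R G g - 1) * (of R G h - 1) := by
  rw [map_mul]
  noncomm_ring

theorem augmentationIdeal_eq_span :
    augmentationIdeal R G = Submodule.span R (Set.range fun g => of R G g - 1) := by
  refine le_antisymm (fun a ha => ?_) (Submodule.span_le.mpr ?_)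
  · have key : ∀ a : MonoidAlgebra R G,
        a - MonoidAlgebra.lift R R G 1 a • 1 ∈
          Submodule.span R (Set.range fun g => of R G g - 1) := by
      intro a
      induction a using MonoidAlgebra.induction_on with
      | of g => simpa using Submodule.subset_span (Set.mem_range_self g)
      | add a b ha hb => simpa [add_smul, add_sub_add_comm] using add_mem ha hb
      | smul r a ha => simpa [smul_sub, mul_smul] using Submodule.smul_mem _ r ha
    simpa [mem_augmentationIdeal.mp ha] using key a
  · rintro _ ⟨g, rfl⟩
    simp [mem_augmentationIdeal]

end Augmentation

theorem lift_mem_upperFiltration_of_mem_pow {R G : Type*} [CommRing R] [Monoid G] {n : ℕ}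
    (ρ : G →* Matrix (Fin n) (Fin n) R) (hρ : ∀ g, ρ g - 1 ∈ upperFiltration R n 1)
    {k : ℕ} {a : MonoidAlgebra R G} (ha : a ∈ augmentationIdeal R G ^ k) :
    MonoidAlgebra.lift R _ G ρ a ∈ upperFiltration R n k := by
  have hΔ : (augmentationIdeal R G).map (MonoidAlgebra.lift R _ G ρ).toLinearMap ≤
      upperFiltration R n 1 := by
    rw [augmentationIdeal_eq_span, Submodule.map_span_le]
    rintro _ ⟨g, rfl⟩
    simpa using hρ g
  have hmap := Submodule.mem_map_of_mem (f := (MonoidAlgebra.lift R _ G ρ).toLinearMap) ha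
  rw [Submodule.map_pow] at hmap
  exact upperFiltration_one_pow_le k (pow_le_pow_left' hΔ k hmap)

theorem lift_eq_zero_of_mem_pow {R G : Type*} [CommRing R] [Monoid G] {n : ℕ}
    (ρ : G →* Matrix (Fin n) (Fin n) R) (hρ : ∀ g, ρ g - 1 ∈ upperFiltration R n 1)
    {a : MonoidAlgebra R G} (ha : a ∈ augmentationIdeal R G ^ n) :
    MonoidAlgebra.lift R _ G ρ a = 0 :=
  eq_zero_of_mem_upperFiltration le_rfl (lift_mem_upperFiltration_of_mem_pow ρ hρ ha)

section Words

variable (R : Type*) [CommRing R] {α : Type*}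

noncomputable def wordProd (w : List α) : MonoidAlgebra R (FreeGroup α) :=
  (w.map fun i => of R (FreeGroup α) (FreeGroup.of i) - 1).prod

noncomputable def wordSpan (α : Type*) (k : ℕ) : Submodule R (MonoidAlgebra R (FreeGroup α)) :=
  Submodule.span R (wordProd R '' {w | w.length = k})

variable {R}

@[simp]
theorem wordProd_nil : wordProd R ([] : List α) = 1 := rfl

@[simp]
theorem wordProd_cons (i : α) (w : List α) :
    wordProd R (i :: w) = (of R (FreeGroup α) (FreeGroup.of i) - 1) * wordProd R w := rfl

theorem wordProd_append (w w' : List α) :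
    wordProd R (w ++ w') = wordProd R w * wordProd R w' := by
  simp [wordProd, List.prod_append]

theorem wordProd_mem_pow (w : List α) :
    wordProd R w ∈ augmentationIdeal R (FreeGroup α) ^ w.length := by
  induction w with
  | nil => exact Submodule.one_le.mp le_rfl
  | cons i w ih =>
    rw [wordProd_cons, List.length_cons, pow_succ']
    exact Submodule.mul_mem_mul (of_sub_one_mem_augmentationIdeal _) ih

theorem wordSpan_le_pow (k : ℕ) : wordSpan R α k ≤ augmentationIdeal R (FreeGroup α) ^ k :=
  Submodule.span_le.mpr <| by
    rintro _ ⟨w, rfl, rfl⟩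
    exact wordProd_mem_pow w

theorem wordSpan_zero : wordSpan R α 0 = 1 := by
  simp [wordSpan, Submodule.one_eq_span]

theorem wordSpan_mul_wordSpan_one_le (k : ℕ) :
    wordSpan R α k * wordSpan R α 1 ≤ wordSpan R α (k + 1) := by
  rw [wordSpan, wordSpan, Submodule.span_mul_span]
  refine Submodule.span_mono ?_
  rintro _ ⟨_, ⟨w, hw, rfl⟩, _, ⟨w', hw', rfl⟩, rfl⟩
  exact ⟨w ++ w', by simp_all, wordProd_append w w'⟩

theorem augmentationIdeal_le_wordSpan_one_sup :
    augmentationIdeal R (FreeGroup α) ≤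
      wordSpan R α 1 ⊔ augmentationIdeal R (FreeGroup α) ^ 2 := by
  have hsq {g h : FreeGroup α} :
      (of R _ g - 1) * (of R _ h - 1) ∈ augmentationIdeal R (FreeGroup α) ^ 2 :=
    pow_two (augmentationIdeal R (FreeGroup α)) ▸
      Submodule.mul_mem_mul (of_sub_one_mem_augmentationIdeal g)
        (of_sub_one_mem_augmentationIdeal h)
  suffices h : ∀ g, of R _ g - 1 ∈
      wordSpan R α 1 ⊔ augmentationIdeal R (FreeGroup α) ^ 2 from
    augmentationIdeal_eq_span.le.trans (Submodule.span_le.mpr (Set.range_subset_iff.mpr h))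
  intro g
  induction g using FreeGroup.induction_on with
  | C1 => simp only [map_one, sub_self, zero_mem]
  | of i => exact Submodule.mem_sup_left (Submodule.subset_span ⟨[i], rfl, by simp⟩)
  | inv_of i hi =>
    have h := of_mul_sub_one (R := R) (FreeGroup.of i)⁻¹ (FreeGroup.of i)
    rw [inv_mul_cancel, map_one, sub_self] at h
    have hinv : of R _ (FreeGroup.of i)⁻¹ - 1 = -(of R _ (FreeGroup.of i) - 1) -
        (of R _ (FreeGroup.of i)⁻¹ - 1) * (of R _ (FreeGroup.of i) - 1) := by
      rw [← zero_add (-_), h]; abel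
    rw [hinv]
    exact sub_mem (neg_mem hi) (Submodule.mem_sup_right hsq)
  | mul g h hg hh =>
    rw [of_mul_sub_one]
    exact add_mem (add_mem hg hh) (Submodule.mem_sup_right hsq)

theorem augmentationIdeal_pow_le_wordSpan_sup (k : ℕ) :
    augmentationIdeal R (FreeGroup α) ^ k ≤
      wordSpan R α k ⊔ augmentationIdeal R (FreeGroup α) ^ (k + 1) := by
  set Δ := augmentationIdeal R (FreeGroup α)
  induction k with
  | zero => simp [wordSpan_zero]
  | succ k ih =>
    have hW : wordSpan R α k * Δ ≤ wordSpan R α (k + 1) ⊔ Δ ^ (k + 2) :=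
      calc wordSpan R α k * Δ ≤ wordSpan R α k * (wordSpan R α 1 ⊔ Δ ^ 2) :=
            mul_le_mul_right augmentationIdeal_le_wordSpan_one_sup _
        _ = wordSpan R α k * wordSpan R α 1 ⊔ wordSpan R α k * Δ ^ 2 :=
            Submodule.mul_sup _ _ _
        _ ≤ wordSpan R α (k + 1) ⊔ Δ ^ (k + 2) :=
            sup_le_sup (wordSpan_mul_wordSpan_one_le k)
              (pow_add Δ k 2 ▸ mul_le_mul_left (wordSpan_le_pow k) _)
    calc Δ ^ (k + 1) = Δ ^ k * Δ := pow_succ Δ k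
      _ ≤ (wordSpan R α k ⊔ Δ ^ (k + 1)) * Δ := mul_le_mul_left ih _
      _ = wordSpan R α k * Δ ⊔ Δ ^ (k + 2) := by rw [Submodule.sup_mul, ← pow_succ]
      _ ≤ wordSpan R α (k + 1) ⊔ Δ ^ (k + 2) := sup_le hW le_sup_right

theorem top_le_span_wordProd_sup_pow {m : ℕ} (hm : 1 ≤ m) :
    ⊤ ≤ Submodule.span R (wordProd R '' {w : List α | w.length < m}) ⊔
      augmentationIdeal R (FreeGroup α) ^ m := by
  induction m, hm using Nat.le_induction with
  | base =>
    intro a _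
    refine Submodule.mem_sup.mpr ⟨MonoidAlgebra.lift R R _ 1 a • 1, ?_, _,
      by simpa using sub_augmentation_smul_one_mem a, add_sub_cancel _ _⟩
    exact Submodule.smul_mem _ _ (Submodule.subset_span ⟨[], by simp, rfl⟩)
  | succ m _ ih =>
    refine ih.trans ((sup_le_sup_left (augmentationIdeal_pow_le_wordSpan_sup m) _).trans ?_)
    rw [← sup_assoc]
    refine sup_le_sup_right (sup_le (Submodule.span_mono (Set.image_mono ?_))
      (Submodule.span_mono (Set.image_mono ?_))) _
    · exact fun w (hw : w.length < m) => Nat.lt_succ_of_lt hw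
    · exact fun w (hw : w.length = m) => hw ▸ Nat.lt_succ_self _

end Words

section GenericRepresentation

variable {R α : Type*} [CommRing R] {n : ℕ}

variable (n) in
def genericShift (t : α × ℕ → R) (i : α) : Matrix (Fin n) (Fin n) R :=
  Matrix.of fun p q => if (q : ℕ) = p + 1 then t (i, p) else 0

theorem genericShift_mem (t : α × ℕ → R) (i : α) :
    genericShift n t i ∈ upperFiltration R n 1 :=
  fun p q h => if_neg (by omega)

variable (n) in
noncomputable def genericRep (t : α × ℕ → R) :
    FreeGroup α →* (Matrix (Fin n) (Fin n) R)ˣ :=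
  (unitriangularGroup R n).subtype.comp <| FreeGroup.lift fun i =>
    ⟨(IsNilpotent.isUnit_one_add
        ⟨n, pow_eq_zero_of_mem_upperFiltration_one (genericShift_mem t i)⟩).unit,
      by simpa [mem_unitriangularGroup] using genericShift_mem t i⟩

theorem genericRep_sub_one_mem (t : α × ℕ → R) (g : FreeGroup α) :
    (genericRep n t g : Matrix (Fin n) (Fin n) R) - 1 ∈ upperFiltration R n 1 :=
  mem_unitriangularGroup.mp (by simp [genericRep])

theorem genericRep_of (t : α × ℕ → R) (i : α) :
    (genericRep n t (FreeGroup.of i) : Matrix (Fin n) (Fin n) R) = 1 + genericShift n t i := by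
  simp [genericRep]

theorem lift_genericRep_wordProd (t : α × ℕ → R) (w : List α) :
    MonoidAlgebra.lift R _ (FreeGroup α) ((Units.coeHom _).comp (genericRep n t)) (wordProd R w) =
      (w.map (genericShift n t)).prod := by
  induction w with
  | nil => simp
  | cons i w ih => simp [ih, genericRep_of]

variable (n) in
def zeroExtend (x : Fin n → R) (p : ℕ) : R :=
  if h : p < n then x ⟨p, h⟩ else 0

theorem zeroExtend_genericShift_mulVec (t : α × ℕ → R) (i : α) (x : Fin n → R) (p : ℕ) :
    zeroExtend n (genericShift n t i *ᵥ x) p = t (i, p) * zeroExtend n x (p + 1) := by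
  unfold zeroExtend
  by_cases hp : p + 1 < n
  · rw [dif_pos (by omega), dif_pos hp, Matrix.mulVec, dotProduct,
      Finset.sum_eq_single ⟨p + 1, hp⟩ (fun q _ hq => ?_) (by simp)]
    · simp [genericShift]
    · simp [genericShift, Fin.ext_iff.not.mp hq]
  · rw [dif_neg hp, mul_zero]
    split_ifs
    · rw [Matrix.mulVec, dotProduct]
      refine Finset.sum_eq_zero fun q _ => ?_
      simp [genericShift, show (q : ℕ) ≠ p + 1 by omega]
    · rfl

theorem zeroExtend_prod_genericShift_mulVec (t : α × ℕ → R) (w : List α) (x : Fin n → R)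
    (p : ℕ) :
    zeroExtend n ((w.map (genericShift n t)).prod *ᵥ x) p =
      ((w.zipIdx p).map t).prod * zeroExtend n x (p + w.length) := by
  induction w generalizing p with
  | nil => simp
  | cons i w ih =>
    rw [List.map_cons, List.prod_cons, ← Matrix.mulVec_mulVec, zeroExtend_genericShift_mulVec, ih,
      List.zipIdx_cons, List.map_cons, List.prod_cons, List.length_cons, mul_assoc,
      Nat.add_right_comm, Nat.add_assoc]

end GenericRepresentation

section Monomials

variable {R σ α : Type*} [CommRing R] [DecidableEq σ] [DecidableEq α]

theorem eval_monomial_toFinsupp (t : σ → R) (l : List σ) :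
    MvPolynomial.eval t (MvPolynomial.monomial (Multiset.toFinsupp ↑l) 1) = (l.map t).prod := by
  induction l with
  | nil => simp [Multiset.toFinsupp_zero]
  | cons a l ih =>
    rw [← Multiset.cons_coe, ← Multiset.singleton_add, Multiset.toFinsupp_add,
      Multiset.toFinsupp_singleton, MvPolynomial.monomial_single_add]
    simp [ih]

noncomputable def wordExponent (w : List α) : α × ℕ →₀ ℕ :=
  Multiset.toFinsupp ↑w.zipIdx

theorem wordExponent_injective : Function.Injective (wordExponent (α := α)) := by
  intro w w' h
  have hmem : ∀ x, x ∈ w.zipIdx ↔ x ∈ w'.zipIdx := fun x => by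
    rw [← Multiset.mem_coe, Multiset.toFinsupp.injective h, Multiset.mem_coe]
  exact List.ext_getElem? fun k => Option.ext fun a =>
    List.mem_zipIdx_iff_getElem?.symm.trans ((hmem (a, k)).trans List.mem_zipIdx_iff_getElem?)

end Monomials

theorem lift_genericRep_wordProd_mulVec_one {R α : Type*} [CommRing R] [DecidableEq α] {n : ℕ}
    (hn : 0 < n) (t : α × ℕ → R) {w : List α} (hw : w.length < n) :
    (MonoidAlgebra.lift R _ (FreeGroup α) ((Units.coeHom _).comp (genericRep n t))
      (wordProd R w) *ᵥ 1) ⟨0, hn⟩ =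
      MvPolynomial.eval t (MvPolynomial.monomial (wordExponent w) 1) := by
  have h := zeroExtend_prod_genericShift_mulVec t w (1 : Fin n → R) 0
  simp only [zeroExtend, dif_pos hn, zero_add, dif_pos hw, Pi.one_apply, mul_one] at h
  rw [lift_genericRep_wordProd, h, wordExponent, eval_monomial_toFinsupp]

theorem eq_zero_of_forall_lift_genericRep_mulVec_one {R α : Type*} [CommRing R] [IsDomain R]
    [Infinite R] [DecidableEq α] {n : ℕ} (hn : 0 < n) {a : MonoidAlgebra R (FreeGroup α)}
    (ha : a ∈ Submodule.span R (wordProd R '' {w | w.length < n}))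
    (h : ∀ t : α × ℕ → R,
      (MonoidAlgebra.lift R _ (FreeGroup α) ((Units.coeHom _).comp (genericRep n t)) a *ᵥ 1)
        ⟨0, hn⟩ = 0) :
    a = 0 := by
  set S : Set (List α) := {w | w.length < n}
  rw [Set.image_eq_range, ← Finsupp.range_linearCombination] at ha
  obtain ⟨c, rfl⟩ := ha
  set mon := fun w : S => MvPolynomial.monomial (wordExponent w.1) (1 : R)
  have hmon : Finsupp.linearCombination R mon c = 0 := by
    refine MvPolynomial.funext fun t => ?_
    let corner : MonoidAlgebra R (FreeGroup α) →ₗ[R] R :=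
      LinearMap.proj (R := R) (φ := fun _ : Fin n => R) ⟨0, hn⟩ ∘ₗ
        (Matrix.mulVecBilin R R).flip 1 ∘ₗ
        (MonoidAlgebra.lift R _ (FreeGroup α) ((Units.coeHom _).comp (genericRep n t))).toLinearMap
    have hcorner : corner ∘ (fun w : S => wordProd R w.1) =
        (MvPolynomial.aeval t).toLinearMap ∘ mon := by
      funext w
      simpa [corner, mon] using lift_genericRep_wordProd_mulVec_one hn t w.2
    have key := Finsupp.apply_linearCombination R corner (fun w => wordProd R w.1) c
    rw [hcorner, ← Finsupp.apply_linearCombination] at key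
    simpa [corner, MvPolynomial.coe_aeval_eq_eval, h t] using key.symm
  have hc : c = 0 := linearIndependent_iff.mp
    ((MvPolynomial.basisMonomials _ R).linearIndependent.comp _
      (wordExponent_injective.comp Subtype.val_injective)) c
    (by rwa [MvPolynomial.coe_basisMonomials])
  simp [hc]

/-- over an infinite field `K`, an element `u ∈ KF` is an identity of the
natural representation `(Kⁿ, UTₙ(K))` of the unitriangular group iff `u` lies in the `n`-th
power of the augmentation ideal `Δ_F` of `KF`; i.e. `𝔖ⁿ` is generated by `(Kⁿ, UTₙ(K))`. -/
theorem Sn_generated_by_unitriangular_representation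
    (K : Type) [Field K] [Infinite K] (n : ℕ) (hn : 1 ≤ n)
    (u : MonoidAlgebra K (FreeGroup ℕ)) :
    (∀ β : FreeGroup ℕ →* (Matrix (Fin n) (Fin n) K)ˣ,
        (∀ w : FreeGroup ℕ,
            (∀ i j : Fin n, j < i → ((β w : (Matrix (Fin n) (Fin n) K)ˣ) : Matrix (Fin n) (Fin n) K) i j = 0) ∧
            (∀ i : Fin n, ((β w : (Matrix (Fin n) (Fin n) K)ˣ) : Matrix (Fin n) (Fin n) K) i i = 1)) →
        ∀ v : Fin n → K,
          Matrix.mulVec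
            ((MonoidAlgebra.lift K (Matrix (Fin n) (Fin n) K) (FreeGroup ℕ)
                ((Units.coeHom (Matrix (Fin n) (Fin n) K)).comp β)) u) v = 0) ↔
    u ∈ ((RingHom.ker ((MonoidAlgebra.lift K K (FreeGroup ℕ))
            (1 : FreeGroup ℕ →* K))).restrictScalars K : Submodule K (MonoidAlgebra K (FreeGroup ℕ))) ^ n := by
  change _ ↔ u ∈ augmentationIdeal K (FreeGroup ℕ) ^ n
  constructor
  · intro H
    obtain ⟨a, ha, r, hr, rfl⟩ :=
      Submodule.mem_sup.mp (top_le_span_wordProd_sup_pow hn (Submodule.mem_top (x := u)))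
    have ha0 : a = 0 := eq_zero_of_forall_lift_genericRep_mulVec_one hn ha fun t => by
      have hu := H (genericRep n t)
        (fun g => sub_one_mem_upperFiltration_one_iff.mp (genericRep_sub_one_mem t g)) 1
      rw [map_add, lift_eq_zero_of_mem_pow _ (genericRep_sub_one_mem t) hr, add_zero] at hu
      exact congrFun hu _
    rwa [ha0, zero_add]
  · intro hu β hβ v
    rw [lift_eq_zero_of_mem_pow _ (fun g => sub_one_mem_upperFiltration_one_iff.mpr (hβ g)) hu,
      Matrix.zero_mulVec]
end

section
/- Let K be a field and I a T-ideal of 𝔽. Then the set of all u ∈ KF that are identities of every representation (V,G) belonging to ηΣ equals the verbal ideal I_Σ(KF), i.e., the two-sided ideal of KF generated by all elements μ(f) with f ∈ I and μ : 𝔽 → KF a K-algebra homomorphism. -/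
/-!
The verbal generators `a * μ f * b` are stable under left multiplication, so their `K`-span is
the left ideal `J` of `KF` they generate. The module `KF ⧸ J` lies in `ηΣ`, and an identity `u`
of it kills `1` under `β = id`, hence `u ∈ J`. Conversely, for a representation `(V, G)` in
`ηΣ` and `β : F →* G`, the induced map sends each verbal generator to `a' * μ' f * b'` with
`μ'` the composite `𝔽 → KF → KG`, which lies in the two-sided ideal `Ann V`.
-/

section VerbalIdeal

variable (K : Type*) {P A B : Type*} [CommSemiring K] [Semiring P] [Algebra K P]
  [Semiring A] [Algebra K A] [Semiring B] [Algebra K B]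

def verbalGenerators (I : Set P) (A : Type*) [Semiring A] [Algebra K A] : Set A :=
  {x | ∃ f ∈ I, ∃ μ : P →ₐ[K] A, ∃ a b : A, x = a * μ f * b}

variable {K} {I : Set P}

lemma mul_mem_verbalGenerators (r : A) {x : A}
    (hx : x ∈ verbalGenerators K I A) : r * x ∈ verbalGenerators K I A := by
  obtain ⟨f, hf, μ, a, b, rfl⟩ := hx
  exact ⟨f, hf, μ, r * a, b, by simp only [mul_assoc]⟩

lemma mul_mem_span_of_mul_mem {s : Set A} (hs : ∀ r, ∀ x ∈ s, r * x ∈ s) (r : A) {x : A}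
    (hx : x ∈ Submodule.span K s) : r * x ∈ Submodule.span K s := by
  have : Submodule.span K s ≤ (Submodule.span K s).comap (LinearMap.mulLeft K r) :=
    Submodule.span_le.2 fun y hy => Submodule.subset_span (hs r y hy)
  exact this hx

lemma restrictScalars_span_eq_of_mul_mem {s : Set A} (hs : ∀ r, ∀ x ∈ s, r * x ∈ s) :
    (Submodule.span A s).restrictScalars K = Submodule.span K s := by
  refine le_antisymm (fun x hx => ?_) (Submodule.span_le_restrictScalars K A s)
  induction hx using Submodule.span_induction with
  | mem y hy => exact Submodule.subset_span hy
  | zero => exact zero_mem _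
  | add y z _ _ hy hz => exact add_mem hy hz
  | smul r y _ hy => exact mul_mem_span_of_mul_mem hs r hy

lemma mem_annihilator_quotient_span_verbalGenerators {R : Type*} [Ring R] [Algebra K R]
    {f : P} (hf : f ∈ I) (μ : P →ₐ[K] R) :
    μ f ∈ Module.annihilator R (R ⧸ Submodule.span R (verbalGenerators K I R)) := by
  refine Module.mem_annihilator.2 fun v => ?_
  obtain ⟨x, rfl⟩ := Submodule.Quotient.mk_surjective _ v
  rw [← Submodule.Quotient.mk_smul, smul_eq_mul, Submodule.Quotient.mk_eq_zero]
  exact Submodule.subset_span ⟨f, hf, μ, 1, x, by rw [one_mul]⟩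

lemma image_verbalGenerators_subset (φ : A →ₐ[K] B) :
    φ '' verbalGenerators K I A ⊆ verbalGenerators K I B := by
  rintro _ ⟨_, ⟨f, hf, μ, a, b, rfl⟩, rfl⟩
  exact ⟨f, hf, φ.comp μ, φ a, φ b, by simp only [map_mul, AlgHom.comp_apply]⟩

lemma verbalGenerators_subset_annihilator {V : Type*} [AddCommMonoid V] [Module B V]
    (hV : ∀ f ∈ I, ∀ μ : P →ₐ[K] B, μ f ∈ Module.annihilator B V) :
    verbalGenerators K I B ⊆ Module.annihilator B V := by
  rintro _ ⟨f, hf, μ, a, b, rfl⟩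
  exact Ideal.mul_mem_right b _ (Ideal.mul_mem_left _ a (hV f hf μ))

lemma map_span_verbalGenerators_le_annihilator {V : Type*} [AddCommMonoid V] [Module B V]
    (hV : ∀ f ∈ I, ∀ μ : P →ₐ[K] B, μ f ∈ Module.annihilator B V)
    (φ : A →ₐ[K] B) :
    (Submodule.span K (verbalGenerators K I A)).map φ.toLinearMap ≤
      (Module.annihilator B V).restrictScalars K := by
  rw [Submodule.map_span, Submodule.span_le]
  exact (image_verbalGenerators_subset φ).trans (verbalGenerators_subset_annihilator hV)

end VerbalIdeal

theorem identities_of_etaSigma_eq_verbal_ideal_general (K : Type) [Field K]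
    (I : Submodule K (FreeAlgebra K ℕ)) :
    {u : MonoidAlgebra K (FreeGroup ℕ) |
      ∀ (G : Type) [Group G] (V : Type) [AddCommGroup V] [Module (MonoidAlgebra K G) V],
        (∀ f ∈ I, ∀ μ : FreeAlgebra K ℕ →ₐ[K] MonoidAlgebra K G, ∀ v : V, μ f • v = 0) →
        ∀ β : FreeGroup ℕ →* G, ∀ v : V, (MonoidAlgebra.mapDomainAlgHom K K β u) • v = 0} =
    (Submodule.span K
      {x : MonoidAlgebra K (FreeGroup ℕ) |
        ∃ f ∈ I, ∃ μ : FreeAlgebra K ℕ →ₐ[K] MonoidAlgebra K (FreeGroup ℕ),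
        ∃ a b : MonoidAlgebra K (FreeGroup ℕ), x = a * μ f * b} :
      Set (MonoidAlgebra K (FreeGroup ℕ))) := by
  set R := MonoidAlgebra K (FreeGroup ℕ)
  set S : Set R := verbalGenerators K (I : Set (FreeAlgebra K ℕ)) R
  change _ = (Submodule.span K S : Set R)
  ext u
  constructor
  · intro hu
    have hu₁ := hu (FreeGroup ℕ) (R ⧸ Submodule.span R S)
      (fun f hf μ => Module.mem_annihilator.1 <|
        mem_annihilator_quotient_span_verbalGenerators hf μ)
      (MonoidHom.id _) (Submodule.Quotient.mk 1)
    rw [MonoidAlgebra.mapDomainAlgHom_id, AlgHom.id_apply, ← Submodule.Quotient.mk_smul,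
      smul_eq_mul, mul_one, Submodule.Quotient.mk_eq_zero] at hu₁
    rw [SetLike.mem_coe,
      ← restrictScalars_span_eq_of_mul_mem fun r _ => mul_mem_verbalGenerators r]
    exact hu₁
  · intro hu G _ V _ _ hV β v
    have hann := map_span_verbalGenerators_le_annihilator
      (fun f hf μ => Module.mem_annihilator.2 (hV f hf μ)) (MonoidAlgebra.mapDomainAlgHom K K β)
    exact Module.mem_annihilator.1 (hann ⟨u, hu, rfl⟩) v

/-- for a T-ideal `I` of `𝔽 = FreeAlgebra K ℕ` over a field `K`, the set of
elements `u ∈ KF` that are identities of every representation in `ηΣ` equals the verbal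
ideal `I_Σ(KF)`, the two-sided ideal of `KF` generated by all `μ f` with `f ∈ I` and
`μ : 𝔽 →ₐ[K] KF`. -/
theorem identities_of_etaSigma_eq_verbal_ideal (K : Type) [Field K]
    (I : Submodule K (FreeAlgebra K ℕ))
    (hI2 : ∀ r : FreeAlgebra K ℕ, ∀ x ∈ I, r * x ∈ I ∧ x * r ∈ I)
    (hIT : ∀ φ : FreeAlgebra K ℕ →ₐ[K] FreeAlgebra K ℕ, ∀ x ∈ I, φ x ∈ I) :
    {u : MonoidAlgebra K (FreeGroup ℕ) |
      ∀ (G : Type) [Group G] (V : Type) [AddCommGroup V] [Module (MonoidAlgebra K G) V],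
        (∀ f ∈ I, ∀ μ : FreeAlgebra K ℕ →ₐ[K] MonoidAlgebra K G, ∀ v : V, μ f • v = 0) →
        ∀ β : FreeGroup ℕ →* G, ∀ v : V, (MonoidAlgebra.mapDomainAlgHom K K β u) • v = 0} =
    (Submodule.span K
      {x : MonoidAlgebra K (FreeGroup ℕ) |
        ∃ f ∈ I, ∃ μ : FreeAlgebra K ℕ →ₐ[K] MonoidAlgebra K (FreeGroup ℕ),
        ∃ a b : MonoidAlgebra K (FreeGroup ℕ), x = a * μ f * b} :
      Set (MonoidAlgebra K (FreeGroup ℕ))) :=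
  identities_of_etaSigma_eq_verbal_ideal_general K I
end

section
/- Let K be a field and let I₁ and I₂ be T-ideals of 𝔽. For a T-ideal J of 𝔽, let V(J) denote the verbal ideal of KF, namely the two-sided ideal of KF generated by all μ(f) with f ∈ J and μ : 𝔽 → KF a K-algebra homomorphism. Then V(I₂·I₁) = V(I₂)·V(I₁), the ideal product in KF. (Consequently the map η′ from the semigroup of varieties of representations of algebras to the semigroup of varieties of representations of groups is a semigroup homomorphism.) -/
open scoped Pointwise


/-- The verbal ideal `V(J)` of `KF` associated with a T-ideal `J` of `𝔽 = FreeAlgebra K ℕ`: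
the two-sided ideal of `KF` generated by all `μ f` with `f ∈ J` and `μ : 𝔽 →ₐ[K] KF`. -/
noncomputable def verbalIdealKF (K : Type) [Field K] (J : Submodule K (FreeAlgebra K ℕ)) :
    Submodule K (MonoidAlgebra K (FreeGroup ℕ)) :=
  Submodule.span K
    {x : MonoidAlgebra K (FreeGroup ℕ) |
      ∃ f ∈ J, ∃ μ : FreeAlgebra K ℕ →ₐ[K] MonoidAlgebra K (FreeGroup ℕ),
      ∃ a b : MonoidAlgebra K (FreeGroup ℕ), x = a * μ f * b}

lemma mem_verbalIdealKF (K : Type) [Field K] (J : Submodule K (FreeAlgebra K ℕ))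
    {f : FreeAlgebra K ℕ} (hf : f ∈ J)
    (μ : FreeAlgebra K ℕ →ₐ[K] MonoidAlgebra K (FreeGroup ℕ))
    (a b : MonoidAlgebra K (FreeGroup ℕ)) :
    a * μ f * b ∈ verbalIdealKF K J :=
  Submodule.subset_span ⟨f, hf, μ, a, b, rfl⟩

/-- for T-ideals `I₁, I₂` of `𝔽` over a field `K`,
`V(I₂ · I₁) = V(I₂) · V(I₁)` as ideals of `KF`; hence the map `η'` from varieties of
representations of algebras to varieties of representations of groups is a semigroup
homomorphism. -/
theorem verbal_ideal_of_product (K : Type) [Field K]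
    (I₁ I₂ : Submodule K (FreeAlgebra K ℕ))
    (hI₁2 : ∀ r : FreeAlgebra K ℕ, ∀ x ∈ I₁, r * x ∈ I₁ ∧ x * r ∈ I₁)
    (hI₁T : ∀ φ : FreeAlgebra K ℕ →ₐ[K] FreeAlgebra K ℕ, ∀ x ∈ I₁, φ x ∈ I₁)
    (hI₂2 : ∀ r : FreeAlgebra K ℕ, ∀ x ∈ I₂, r * x ∈ I₂ ∧ x * r ∈ I₂)
    (hI₂T : ∀ φ : FreeAlgebra K ℕ →ₐ[K] FreeAlgebra K ℕ, ∀ x ∈ I₂, φ x ∈ I₂) :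
    verbalIdealKF K (I₂ * I₁) = verbalIdealKF K I₂ * verbalIdealKF K I₁ := by
  apply le_antisymm
  · -- V(I₂·I₁) ≤ V(I₂)·V(I₁)
    rw [verbalIdealKF, Submodule.span_le]
    rintro x ⟨f, hf, μ, a, b, rfl⟩
    refine Submodule.mul_induction_on (C := fun f => a * μ f * b ∈
      verbalIdealKF K I₂ * verbalIdealKF K I₁) hf (fun g hg h hh => ?_)
      (fun x y hx hy => ?_)
    · have h1 : a * μ g ∈ verbalIdealKF K I₂ := by
          simpa using mem_verbalIdealKF K I₂ hg μ a 1
      have h2 : μ h * b ∈ verbalIdealKF K I₁ := by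
          simpa using mem_verbalIdealKF K I₁ hh μ 1 b
      have := Submodule.mul_mem_mul h1 h2
      simpa [map_mul, mul_assoc] using this
    · simpa [map_add, mul_add, add_mul] using add_mem hx hy
  · -- V(I₂)·V(I₁) ≤ V(I₂·I₁)
    rw [show verbalIdealKF K I₂ * verbalIdealKF K I₁ =
        Submodule.span K (_ * _) from Submodule.span_mul_span K _ _]
    rw [Submodule.span_le]
    rintro x ⟨m, ⟨g, hg, μ, a, b, rfl⟩, n, ⟨h, hh, ν, c, d, rfl⟩, rfl⟩
    -- combine μ and ν into a single algebra homomorphism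
    set lam : FreeAlgebra K ℕ →ₐ[K] MonoidAlgebra K (FreeGroup ℕ) :=
      FreeAlgebra.lift K (fun n =>
        if n = 0 then b * c
        else if n % 2 = 1 then μ (FreeAlgebra.ι K ((n - 1) / 2))
        else ν (FreeAlgebra.ι K (n / 2 - 1))) with hlam
    set e₁ : FreeAlgebra K ℕ →ₐ[K] FreeAlgebra K ℕ :=
      FreeAlgebra.lift K (fun n => FreeAlgebra.ι K (2 * n + 1)) with he₁
    set e₂ : FreeAlgebra K ℕ →ₐ[K] FreeAlgebra K ℕ :=
      FreeAlgebra.lift K (fun n => FreeAlgebra.ι K (2 * n + 2)) with he₂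
    have key1 : lam.comp e₁ = μ := by
      apply FreeAlgebra.hom_ext
      ext n
      have h2 : (2 * n + 1) % 2 = 1 := by omega
      have h3 : (2 * n + 1 - 1) / 2 = n := by omega
      simp [hlam, he₁, FreeAlgebra.lift_ι_apply, h2, h3]
    have key2 : lam.comp e₂ = ν := by
      apply FreeAlgebra.hom_ext
      ext n
      have h2 : (2 * n + 2) % 2 = 0 := by omega
      have h3 : (2 * n + 2) / 2 - 1 = n := by omega
      simp [hlam, he₂, FreeAlgebra.lift_ι_apply, h2, h3]
    have hf : e₁ g * FreeAlgebra.ι K 0 * e₂ h ∈ I₂ * I₁ :=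
      Submodule.mul_mem_mul ((hI₂2 (FreeAlgebra.ι K 0) _ (hI₂T e₁ g hg)).2) (hI₁T e₂ h hh)
    have := mem_verbalIdealKF K (I₂ * I₁) hf lam a d
    have hlg : lam (e₁ g) = μ g := by rw [← key1]; rfl
    have hlh : lam (e₂ h) = ν h := by rw [← key2]; rfl
    have hl0 : lam (FreeAlgebra.ι K 0) = b * c := by
      simp [hlam, FreeAlgebra.lift_ι_apply]
    rw [map_mul, map_mul, hlg, hlh, hl0] at this
    simpa [mul_assoc] using this
end

section
/- Let K be a field with more than two elements and let n ≥ 1. There is no subset S of 𝔽 such that for every representation (V,G) over K the following equivalence holds: [for all g₁,…,gₙ ∈ G the element (g₁−1)(g₂−1)⋯(gₙ−1) of KG annihilates V] if and only if [every f ∈ S is a polynomial identity of (V,G)]. In other words, the variety 𝔖ⁿ of representations of groups is not a polynomial variety. -/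
/-!
The trivial group lies in `𝔖ⁿ`, so every `f ∈ S` is an identity of the regular representation
of the trivial group, and hence vanishes at every point `φ : 𝔽 →ₐ[K] K`. A one-dimensional
representation given by a character `χ` acts through the algebra map `KG → K` induced by `χ`,
so it satisfies every `f ∈ S`. But for the natural character of `Kˣ` on `K` and an
`a ∉ {0, 1}`, the element `(a - 1)ⁿ` does not annihilate `K`, so this representation is not
in `𝔖ⁿ`.
-/

namespace MonoidAlgebra

def IsPolynomialIdentity (K G V : Type*) [CommSemiring K] [Monoid G] [AddCommMonoid V]
    [Module (MonoidAlgebra K G) V] {A : Type*} [Semiring A] [Algebra K A] (f : A) : Prop :=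
  ∀ μ : A →ₐ[K] MonoidAlgebra K G, ∀ v : V, μ f • v = 0

variable {K : Type*} [CommRing K] {G : Type*} [Monoid G] {A : Type*} [Semiring A] [Algebra K A]

theorem prod_ofFn_of_sub_one_eq_zero [Subsingleton G] {n : ℕ} (hn : 1 ≤ n) (g : Fin n → G) :
    (List.ofFn fun i => of K G (g i) - 1).prod = 0 := by
  have hfactor : (fun i => of K G (g i) - 1) = fun _ => 0 := by
    funext i
    rw [Subsingleton.elim (g i) 1, map_one, sub_self]
  rw [hfactor, List.ofFn_const, List.prod_replicate, zero_pow (by omega)]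

theorem lift_prod_ofFn_of_sub_one (χ : G →* K) {n : ℕ} (g : Fin n → G) :
    lift K K G χ (List.ofFn fun i => of K G (g i) - 1).prod = ∏ i, (χ (g i) - 1) := by
  simp [map_list_prod, List.prod_ofFn]

theorem algHom_apply_eq_zero_of_isPolynomialIdentity {f : A}
    (hf : IsPolynomialIdentity K G (MonoidAlgebra K G) f) (φ : A →ₐ[K] K) : φ f = 0 := by
  have h := hf ((Algebra.ofId K (MonoidAlgebra K G)).comp φ) 1
  rw [smul_eq_mul, mul_one] at h
  exact FaithfulSMul.algebraMap_injective K (MonoidAlgebra K G) (h.trans (map_zero _).symm)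

theorem isPolynomialIdentity_of_smul_eq {V : Type*} [AddCommGroup V] [Module K V]
    [Module (MonoidAlgebra K G) V] (ψ : MonoidAlgebra K G →ₐ[K] K)
    (hψ : ∀ (r : MonoidAlgebra K G) (v : V), r • v = ψ r • v) {f : A}
    (hf : ∀ φ : A →ₐ[K] K, φ f = 0) : IsPolynomialIdentity K G V f := by
  intro μ v
  rw [hψ, ← AlgHom.comp_apply, hf, zero_smul]

end MonoidAlgebra

open MonoidAlgebra

/-- over a field `K` with more than two elements, the variety `𝔖ⁿ` of
representations of groups (defined by `x ∘ (y₁ - 1)⋯(yₙ - 1) ≡ 0`) is not a polynomial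
variety: no subset `S` of `𝔽 = FreeAlgebra K ℕ` has the property that a representation
`(V, G)` satisfies the identity of `𝔖ⁿ` iff every `f ∈ S` is a polynomial identity of
`(V, G)`. -/
theorem Sn_is_not_polynomial (K : Type) [Field K] (hK : 3 ≤ Cardinal.mk K)
    (n : ℕ) (hn : 1 ≤ n) :
    ¬ ∃ S : Set (FreeAlgebra K ℕ),
        ∀ (G : Type) [Group G] (V : Type) [AddCommGroup V] [Module (MonoidAlgebra K G) V],
          ((∀ g : Fin n → G, ∀ v : V,
              (List.ofFn fun i => MonoidAlgebra.of K G (g i) - 1).prod • v = 0) ↔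
           (∀ f ∈ S, ∀ μ : FreeAlgebra K ℕ →ₐ[K] MonoidAlgebra K G, ∀ v : V, μ f • v = 0)) := by
  obtain ⟨a, ha0, ha1⟩ := Cardinal.exists_ne_ne_of_three_le hK 0 1
  rintro ⟨S, hS⟩
  have hpoints : ∀ f ∈ S, ∀ φ : FreeAlgebra K ℕ →ₐ[K] K, φ f = 0 := fun f hf =>
    algHom_apply_eq_zero_of_isPolynomialIdentity <| (hS Unit (MonoidAlgebra K Unit)).mp
      (fun g v => by rw [prod_ofFn_of_sub_one_eq_zero hn, zero_smul]) f hf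
  let ψ := lift K K Kˣ (Units.coeHom K)
  let _ : Module (MonoidAlgebra K Kˣ) K := Module.compHom K ψ.toRingHom
  have hnatural := (hS Kˣ K).mpr
    (fun f hf => isPolynomialIdentity_of_smul_eq ψ (fun _ _ => rfl) (hpoints f hf))
    (fun _ => Units.mk0 a ha0) 1
  change ψ _ * 1 = 0 at hnatural
  rw [mul_one, lift_prod_ofFn_of_sub_one, Finset.prod_eq_zero_iff] at hnatural
  obtain ⟨_, _, ha⟩ := hnatural
  exact ha1 (sub_eq_zero.mp ha)
end

section
/- Let K be a field and let (V,G) and (W,H) be representations over K. Suppose that every element u ∈ KF which is an identity of (V,G) is also an identity of (W,H) (i.e., (W,H) belongs to the variety generated by (V,G)). If f ∈ 𝔽 is a polynomial identity of (V,G), then f is a polynomial identity of (W,H). -/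
/-!
A substitution `μ : 𝔽 → KH` sends each of the countably many generators of `𝔽` to a finitely
supported element, so only countably many elements of `H` are involved. Enumerating them
by the generators of `F` gives `β : F → H` and a lift `ν : 𝔽 → KF` with `μ = β_* ∘ ν`. Every
`β' : F → G` turns `ν` into a substitution into `KG`, so `ν f` is an identity of `(V, G)`, hence
of `(W, H)`, and evaluating it at `β` gives `μ f`.
-/

theorem FreeAlgebra.exists_comp_eq_of_forall_mem_range {R X A B : Type*} [CommSemiring R]
    [Semiring A] [Algebra R A] [Semiring B] [Algebra R B]
    (μ : FreeAlgebra R X →ₐ[R] A) (φ : B →ₐ[R] A) (h : ∀ i, μ (ι R i) ∈ φ.range) :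
    ∃ ν : FreeAlgebra R X →ₐ[R] B, φ.comp ν = μ := by
  choose b hb using h
  exact ⟨lift R b, hom_ext <| funext fun i => by simpa using hb i⟩

theorem FreeGroup.exists_subset_range_of_countable {H : Type*} [Group H] {S : Set H}
    (hS : S.Countable) : ∃ β : FreeGroup ℕ →* H, S ⊆ Set.range β := by
  obtain ⟨g, hg⟩ := (hS.insert 1).exists_eq_range (Set.insert_nonempty 1 S)
  refine ⟨lift g, fun s hs => ?_⟩
  obtain ⟨n, rfl⟩ : s ∈ Set.range g := hg ▸ Set.mem_insert_of_mem 1 hs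
  exact ⟨of n, lift_apply_of⟩

theorem MonoidAlgebra.mem_range_mapDomainAlgHom {R M N : Type*} [CommSemiring R] [Monoid M]
    [Monoid N] (β : M →* N) {x : MonoidAlgebra R N} (hx : ↑x.coeff.support ⊆ Set.range β) :
    x ∈ (mapDomainAlgHom R R β).range := by
  rw [← x.sum_coeff_single]
  refine Subalgebra.sum_mem _ fun a ha => ?_
  obtain ⟨b, rfl⟩ := hx ha
  exact ⟨single b (x.coeff (β b)), by simp [mapDomain_single]⟩

theorem FreeAlgebra.exists_freeGroup_factorization {K X H : Type*} [CommSemiring K] [Countable X]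
    [Group H] (μ : FreeAlgebra K X →ₐ[K] MonoidAlgebra K H) :
    ∃ (β : FreeGroup ℕ →* H) (ν : FreeAlgebra K X →ₐ[K] MonoidAlgebra K (FreeGroup ℕ)),
      (MonoidAlgebra.mapDomainAlgHom K K β).comp ν = μ := by
  obtain ⟨β, hβ⟩ := FreeGroup.exists_subset_range_of_countable
    (Set.countable_iUnion fun i => (μ (ι K i)).coeff.support.countable_toSet)
  exact ⟨β, exists_comp_eq_of_forall_mem_range μ _ fun i =>
    MonoidAlgebra.mem_range_mapDomainAlgHom β ((Set.subset_iUnion _ i).trans hβ)⟩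

/-- if every identity `u ∈ KF` of the representation `(V, G)` is also an
identity of `(W, H)` (i.e. `(W, H)` lies in the variety generated by `(V, G)`), then every
polynomial identity `f ∈ 𝔽` of `(V, G)` is a polynomial identity of `(W, H)`. -/
theorem polynomial_identity_passes_to_generated_variety
    (K : Type) [Field K]
    (G : Type) [Group G] (V : Type) [AddCommGroup V] [Module (MonoidAlgebra K G) V]
    (H : Type) [Group H] (W : Type) [AddCommGroup W] [Module (MonoidAlgebra K H) W]
    (hvar : ∀ u : MonoidAlgebra K (FreeGroup ℕ),
      (∀ β : FreeGroup ℕ →* G, ∀ v : V, (MonoidAlgebra.mapDomainAlgHom K K β u) • v = 0) →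
      (∀ β : FreeGroup ℕ →* H, ∀ w : W, (MonoidAlgebra.mapDomainAlgHom K K β u) • w = 0))
    (f : FreeAlgebra K ℕ)
    (hf : ∀ μ : FreeAlgebra K ℕ →ₐ[K] MonoidAlgebra K G, ∀ v : V, μ f • v = 0) :
    ∀ μ : FreeAlgebra K ℕ →ₐ[K] MonoidAlgebra K H, ∀ w : W, μ f • w = 0 := by
  intro μ w
  obtain ⟨β, ν, rfl⟩ := FreeAlgebra.exists_freeGroup_factorization μ
  have hν : ∀ β' : FreeGroup ℕ →* G, ∀ v : V,
      MonoidAlgebra.mapDomainAlgHom K K β' (ν f) • v = 0 :=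
    fun β' => hf ((MonoidAlgebra.mapDomainAlgHom K K β').comp ν)
  exact hvar (ν f) hν β w
end

section
/- Let K be a field and S a set of elements of 𝔽. Let 𝔇(Σ) be the class of groups G admitting an injective group homomorphism into the group of units A× of some unital associative K-algebra A satisfying μ(f) = 0 for every f ∈ S and every K-algebra homomorphism μ : 𝔽 → A. Then 𝔇(Σ) is a quasivariety of groups: (i) the trivial group belongs to 𝔇(Σ); (ii) every subgroup of a group in 𝔇(Σ) belongs to 𝔇(Σ); (iii) 𝔇(Σ) is closed under filtered products: if G_i ∈ 𝔇(Σ) for all i in an index set ι and D is a filter on ι, then the quotient of ∏ G_i by the normal subgroup N = {g ∈ ∏ G_i : {i ∈ ι : g(i) = 1} ∈ D} belongs to 𝔇(Σ). -/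
/-- A witness that the group `G` is a PI-group for the variety `Σ` of associative
`K`-algebras determined by the identities `f = 0`, `f ∈ S ⊆ 𝔽 = FreeAlgebra K ℕ`: a
faithful linearization of `G` in an algebra from `Σ`, i.e. an injective group homomorphism
of `G` into the unit group of an algebra satisfying all the identities from `S`. -/
structure PIGroupWitness (K : Type) [Field K] (S : Set (FreeAlgebra K ℕ))
    (G : Type) [Group G] where
  A : Type
  [ringA : Ring A]
  [algebraA : Algebra K A]
  identities : ∀ f ∈ S, ∀ μ : FreeAlgebra K ℕ →ₐ[K] A, μ f = 0
  ρ : G →* Aˣ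
  injective : Function.Injective ρ

/-- Membership in the class `𝔇(Σ)` of all PI-groups for `Σ`. -/
def MemD (K : Type) [Field K] (S : Set (FreeAlgebra K ℕ)) (G : Type) [Group G] : Prop :=
  Nonempty (PIGroupWitness K S G)

/-- The subgroup of the product `∀ i, G i` consisting of the elements equal to `1` on a set
of indices belonging to the filter `D`; the filtered product is the quotient by it. -/
def filterKernel (ι : Type) (G : ι → Type) [∀ i, Group (G i)] (D : Filter ι) :
    Subgroup (∀ i, G i) where
  carrier := {g | {i | g i = 1} ∈ D}
  one_mem' := Filter.univ_mem' fun i => Pi.one_apply i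
  mul_mem' := by
    intro a b ha hb
    filter_upwards [ha, hb] with i hai hbi
    simp only [Set.mem_setOf_eq] at *
    simp [hai, hbi]
  inv_mem' := by
    intro a ha
    filter_upwards [ha] with i hai
    simp only [Set.mem_setOf_eq] at *
    simp [hai]

instance filterKernel_normal (ι : Type) (G : ι → Type) [∀ i, Group (G i)] (D : Filter ι) :
    (filterKernel ι G D).Normal where
  conj_mem := by
    intro a ha g
    show {i | (g * a * g⁻¹) i = 1} ∈ D
    filter_upwards [ha] with i hai
    have hai' : a i = 1 := hai
    show (g * a * g⁻¹) i = 1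
    simp [Pi.mul_apply, Pi.inv_apply, hai']

/-! The identities of `Σ` pass from algebras `A i` to their product, and from there to any quotient
of it, in particular to the quotient of `∏ A i` by the congruence "equal on a set of `D`". Faithful
linearizations `ρ i : G i →* (A i)ˣ` therefore assemble into a linearization of `∏ G i` in that
quotient, whose kernel is exactly the filter kernel `N`; so `(∏ G i) ⧸ N` embeds into its units. -/

section Identities

variable (R : Type*) {X : Type*} [CommSemiring R]

def SatisfiesIdentity (A : Type*) [Semiring A] [Algebra R A] (f : FreeAlgebra R X) : Prop :=
  ∀ μ : FreeAlgebra R X →ₐ[R] A, μ f = 0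

variable {R}

theorem SatisfiesIdentity.of_subsingleton (A : Type*) [Semiring A] [Algebra R A] [Subsingleton A]
    (f : FreeAlgebra R X) : SatisfiesIdentity R A f :=
  fun _ => Subsingleton.elim _ _

theorem SatisfiesIdentity.of_surjective {A B : Type*} [Semiring A] [Algebra R A] [Semiring B]
    [Algebra R B] {f : FreeAlgebra R X} (h : SatisfiesIdentity R A f) (φ : A →ₐ[R] B)
    (hφ : Function.Surjective φ) : SatisfiesIdentity R B f := by
  intro μ
  choose lift hlift using fun x => hφ (μ (FreeAlgebra.ι R x))
  have hμ : φ.comp (FreeAlgebra.lift R lift) = μ :=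
    FreeAlgebra.hom_ext (funext fun x => by simp [hlift])
  rw [← hμ, AlgHom.comp_apply, h, map_zero]

theorem SatisfiesIdentity.pi {ι : Type*} {A : ι → Type*} [∀ i, Semiring (A i)]
    [∀ i, Algebra R (A i)] {f : FreeAlgebra R X} (h : ∀ i, SatisfiesIdentity R (A i) f) :
    SatisfiesIdentity R (∀ i, A i) f :=
  fun μ => funext fun i => h i ((Pi.evalAlgHom R A i).comp μ)

end Identities

def filterRingCon {ι : Type*} (D : Filter ι) (A : ι → Type*) [∀ i, Add (A i)]
    [∀ i, Mul (A i)] : RingCon (∀ i, A i) where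
  r a b := ∀ᶠ i in D, a i = b i
  iseqv :=
    ⟨fun _ => .of_forall fun _ => rfl, fun h => h.mono fun _ => Eq.symm,
      fun h₁ h₂ => (h₁.and h₂).mono fun _ h => h.1.trans h.2⟩
  add' h₁ h₂ := (h₁.and h₂).mono fun _ h => congr_arg₂ (· + ·) h.1 h.2
  mul' h₁ h₂ := (h₁.and h₂).mono fun _ h => congr_arg₂ (· * ·) h.1 h.2

section FilterProduct

variable {ι : Type} {G : ι → Type} [∀ i, Group (G i)] (D : Filter ι) {A : ι → Type*}
  [∀ i, Semiring (A i)]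

def filterProductUnitsHom (ρ : ∀ i, G i →* (A i)ˣ) :
    (∀ i, G i) →* (filterRingCon D A).Quotientˣ :=
  (Units.map (filterRingCon D A).mk'.toMonoidHom).comp
    (MulEquiv.piUnits.symm.toMonoidHom.comp (MonoidHom.piMap ρ))

theorem ker_filterProductUnitsHom {ρ : ∀ i, G i →* (A i)ˣ} (hρ : ∀ i, Function.Injective (ρ i)) :
    (filterProductUnitsHom D ρ).ker = filterKernel ι G D := by
  ext g
  rw [MonoidHom.mem_ker, Units.ext_iff]
  change ((_ : ∀ i, A i) : (filterRingCon D A).Quotient) = ((1 : ∀ i, A i) : _) ↔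
    ∀ᶠ i in D, g i = 1
  rw [RingCon.eq]
  change (∀ᶠ i in D, (ρ i (g i) : A i) = 1) ↔ _
  simp only [Units.val_eq_one, map_eq_one_iff _ (hρ _)]

end FilterProduct

section PIGroups

variable {K : Type} [Field K] {S : Set (FreeAlgebra K ℕ)}

theorem memD_of_subsingleton (G : Type) [Group G] [Subsingleton G] : MemD K S G :=
  ⟨{ A := PUnit
     identities := fun f _ => SatisfiesIdentity.of_subsingleton PUnit f
     ρ := 1
     injective := Function.injective_of_subsingleton _ }⟩

theorem MemD.of_injective {G H : Type} [Group G] [Group H] (hG : MemD K S G) (φ : H →* G)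
    (hφ : Function.Injective φ) : MemD K S H :=
  let ⟨w⟩ := hG
  let := w.ringA
  let := w.algebraA
  ⟨{ A := w.A
     identities := w.identities
     ρ := w.ρ.comp φ
     injective := w.injective.comp hφ }⟩

theorem MemD.filterProduct {ι : Type} {G : ι → Type} [∀ i, Group (G i)] (D : Filter ι)
    (hG : ∀ i, MemD K S (G i)) : MemD K S ((∀ i, G i) ⧸ filterKernel ι G D) := by
  have w i : PIGroupWitness K S (G i) := (hG i).some
  let := fun i => (w i).ringA
  let := fun i => (w i).algebraA
  have hker := ker_filterProductUnitsHom D fun i => (w i).injective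
  exact ⟨{ A := (filterRingCon D fun i => (w i).A).Quotient
           identities := fun f hf =>
             (SatisfiesIdentity.pi fun i => (w i).identities f hf).of_surjective
               (RingCon.mkₐ K _) (RingCon.mkₐ_surjective _)
           ρ := QuotientGroup.lift _ _ hker.ge
           injective := (QuotientGroup.injective_lift_iff _ _ _).mpr hker.symm }⟩

end PIGroups

/-- the class `𝔇(Σ)` is a quasivariety of groups: it contains the trivial
group, is closed under subgroups, and is closed under filtered products. -/
theorem PIgroups_quasivariety (K : Type) [Field K] (S : Set (FreeAlgebra K ℕ)) :
    MemD K S PUnit ∧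
    (∀ (G : Type) [Group G] (H : Subgroup G), MemD K S G → MemD K S H) ∧
    (∀ (ι : Type) (G : ι → Type) [∀ i, Group (G i)] (D : Filter ι),
        (∀ i, MemD K S (G i)) → MemD K S ((∀ i, G i) ⧸ filterKernel ι G D)) :=
  ⟨memD_of_subsingleton PUnit, fun _ _ H hG => hG.of_injective H.subtype H.subtype_injective,
    fun _ _ _ D hG => MemD.filterProduct D hG⟩
end

section
/- Let K be an integral domain whose group of units K× is finite of order m, and let (K, K×) be the representation in which K× acts on the K-module K by multiplication. Then an element u ∈ KF is an identity of the representation (K, K×) if and only if u is an identity of every representation (V,G) over K in which the action operators commute and every operator has order dividing m, i.e., (v∘g)∘h = (v∘h)∘g and v∘gᵐ = v for all v ∈ V and g, h ∈ G. (The variety ω𝔄_m is generated by (K, K×).) -/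
/-!
A representation in `ω𝔄_m` sees `β : F → G` only through the abelianization modulo `m`,
`F → A = (ℕ →₀ ZMod m)`, so `u` acts on it as zero as soon as its image `ū ∈ K[A]` vanishes.
If `u` is an identity of `(K, K×)`, then every character `A → K×` kills `ū`. Reading `ū` as a
polynomial whose exponents are reduced into `[0, m)`, it vanishes on `(K×)^ℕ`, a grid whose sides
have `m` points each, so `ū = 0` by the combinatorial Nullstellensatz. Conversely `(K, K×)` itself
lies in `ω𝔄_m`.
-/

open Finset MonoidAlgebra Multiplicative

namespace Finsupp

variable {ι C : Type*} [CommMonoid C] (m : ℕ) [NeZero m]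

def zmodLift (a : ι → C) (ha : ∀ i, a i ^ m = 1) : Multiplicative (ι →₀ ZMod m) →* C where
  toFun x := (toAdd x).prod fun i e => a i ^ e.val
  map_one' := prod_zero_index
  map_mul' x y := by
    classical
    refine prod_add_index (fun _ _ => by rw [ZMod.val_zero, pow_zero]) fun i _ e e' => ?_
    rw [ZMod.val_add, ← pow_eq_pow_mod _ (ha i), pow_add]

theorem zmodLift_apply (a : ι → C) (ha : ∀ i, a i ^ m = 1) (x : Multiplicative (ι →₀ ZMod m)) :
    zmodLift m a ha x = (toAdd x).prod fun i e => a i ^ e.val := rfl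

theorem zmodLift_single_one (a : ι → C) (ha : ∀ i, a i ^ m = 1) (i : ι) :
    zmodLift m a ha (ofAdd (single i 1)) = a i := by
  rw [zmodLift_apply, toAdd_ofAdd, prod_single_index (by rw [ZMod.val_zero, pow_zero]),
    ZMod.val_one_eq_one_mod, ← pow_eq_pow_mod _ (ha i), pow_one]

end Finsupp

namespace FreeGroup

variable {ι : Type*}

noncomputable def toFinsuppZMod (m : ℕ) : FreeGroup ι →* Multiplicative (ι →₀ ZMod m) :=
  FreeGroup.lift fun i => ofAdd (Finsupp.single i 1)

open scoped IsMulCommutative in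
theorem exists_comp_toFinsuppZMod_eq {M : Type*} [Monoid M] (m : ℕ) [NeZero m]
    (φ : FreeGroup ι →* M) (hcomm : ∀ x y, Commute (φ x) (φ y)) (hpow : ∀ x, φ x ^ m = 1) :
    ∃ Φ : Multiplicative (ι →₀ ZMod m) →* M, Φ.comp (toFinsuppZMod m) = φ := by
  have : IsMulCommutative (MonoidHom.mrange φ) := .of_setLike_mul_comm <| by
    rintro _ ⟨x, rfl⟩ _ ⟨y, rfl⟩
    exact hcomm x y
  let a i := φ.mrangeRestrict (of i)
  have ha i : a i ^ m = 1 := Subtype.ext (hpow _)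
  refine ⟨(MonoidHom.mrange φ).subtype.comp (Finsupp.zmodLift m a ha), ext_hom _ _ fun i => ?_⟩
  simp [toFinsuppZMod, Finsupp.zmodLift_single_one, a]

end FreeGroup

namespace MvPolynomial

theorem eq_zero_of_eval_zero_at_prod_finset' {R σ : Type*} [CommRing R] [IsDomain R]
    (P : MvPolynomial σ R) (S : σ → Finset R) (Hdeg : ∀ i, P.degreeOf i < #(S i))
    (Heval : ∀ x : σ → R, (∀ i, x i ∈ S i) → eval x P = 0) :
    P = 0 := by
  obtain ⟨n, f, hf, Q, rfl⟩ := exists_fin_rename P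
  choose g hg using fun i => card_pos.mp (Nat.zero_lt_of_lt (Hdeg i))
  suffices Q = 0 by rw [this, map_zero]
  refine eq_zero_of_eval_zero_at_prod_finset Q (S ∘ f)
    (fun i => (degreeOf_rename_of_injective hf i).symm.trans_lt (Hdeg (f i))) fun y hy => ?_
  have hxf : Function.extend f y g ∘ f = y := _root_.funext (hf.extend_apply y g)
  rw [← hxf, ← eval_rename]
  refine Heval _ fun j => ?_
  by_cases hj : ∃ i, f i = j
  · obtain ⟨i, rfl⟩ := hj
    simpa [hf.extend_apply] using hy i
  · simpa [Function.extend_apply' _ _ _ hj] using hg j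

end MvPolynomial

namespace MonoidAlgebra

variable {K ι : Type*} [CommRing K] {m : ℕ}

noncomputable def toMvPolynomial (w : MonoidAlgebra K (Multiplicative (ι →₀ ZMod m))) :
    MvPolynomial ι K :=
  w.coeff.sum fun x c => MvPolynomial.monomial ((toAdd x).mapRange ZMod.val ZMod.val_zero) c

theorem coeff_toMvPolynomial [NeZero m] (w : MonoidAlgebra K (Multiplicative (ι →₀ ZMod m)))
    (x : Multiplicative (ι →₀ ZMod m)) :
    (toMvPolynomial w).coeff ((toAdd x).mapRange ZMod.val ZMod.val_zero) = w.coeff x := by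
  classical
  have hinj := Finsupp.mapRange_injective (α := ι) _ ZMod.val_zero (ZMod.val_injective m)
  rw [toMvPolynomial, Finsupp.sum, MvPolynomial.coeff_sum]
  simp_rw [MvPolynomial.coeff_monomial, hinj.eq_iff, toAdd.injective.eq_iff]
  rw [sum_ite_eq', ite_eq_left_iff, Finsupp.mem_support_iff, not_not]
  exact Eq.symm

theorem degreeOf_toMvPolynomial_lt [NeZero m] (w : MonoidAlgebra K (Multiplicative (ι →₀ ZMod m)))
    (i : ι) : (toMvPolynomial w).degreeOf i < m := by
  classical
  rw [MvPolynomial.degreeOf_lt_iff (NeZero.pos m)]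
  intro d hd
  obtain ⟨x, -, hx⟩ := mem_biUnion.mp (MvPolynomial.support_sum hd)
  rw [Finset.mem_singleton.mp (MvPolynomial.support_monomial_subset hx)]
  exact ZMod.val_lt _

theorem eval_toMvPolynomial [NeZero m] (w : MonoidAlgebra K (Multiplicative (ι →₀ ZMod m)))
    (t : ι → Kˣ) (ht : ∀ i, t i ^ m = 1) :
    MvPolynomial.eval (fun i => (t i : K)) (toMvPolynomial w) =
      lift K K _ ((Units.coeHom K).comp (Finsupp.zmodLift m t ht)) w := by
  rw [toMvPolynomial, lift_apply, Finsupp.sum, map_sum, Finsupp.sum]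
  refine sum_congr rfl fun x _ => ?_
  rw [MvPolynomial.eval_monomial, Finsupp.prod_mapRange_index (fun _ => pow_zero _),
    MonoidHom.comp_apply, Finsupp.zmodLift_apply, Units.coeHom_apply, smul_eq_mul]
  simp [Finsupp.prod]

theorem eq_zero_of_forall_lift_eq_zero_s17 [IsDomain K] [Finite Kˣ] (hm : Nat.card Kˣ = m)
    (w : MonoidAlgebra K (Multiplicative (ι →₀ ZMod m)))
    (h : ∀ χ : Multiplicative (ι →₀ ZMod m) →* Kˣ, lift K K _ ((Units.coeHom K).comp χ) w = 0) :
    w = 0 := by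
  have : NeZero m := ⟨hm ▸ Nat.card_pos.ne'⟩
  have : Fintype Kˣ := Fintype.ofFinite _
  let S : Finset K := univ.map ⟨Units.val, Units.val_injective⟩
  have hS : #S = m := by rw [card_map, card_univ, ← Nat.card_eq_fintype_card, hm]
  have hP : toMvPolynomial w = 0 := by
    refine MvPolynomial.eq_zero_of_eval_zero_at_prod_finset' _ (fun _ => S)
      (fun i => hS ▸ degreeOf_toMvPolynomial_lt w i) fun x hx => ?_
    choose t _ ht using fun i => mem_map.mp (hx i)
    obtain rfl : (fun i => (t i : K)) = x := funext ht
    rw [eval_toMvPolynomial w t fun i => by rw [← hm]; exact pow_card_eq_one']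
    exact h _
  ext x
  rw [← coeff_toMvPolynomial, hP, MvPolynomial.coeff_zero]
  rfl

theorem lift_comp_mapDomainAlgHom {R A M N : Type*} [CommSemiring R] [Semiring A] [Algebra R A]
    [Monoid M] [Monoid N] (F : N →* A) (f : M →* N) :
    (lift R A N F).comp (mapDomainAlgHom R R f) = lift R A M (F.comp f) := by
  ext
  simp

theorem map_mapDomain_eq_liftNC_mapDomain {k G F A B : Type*} [Semiring k] [Monoid G] [Monoid F]
    [Monoid A] [Semiring B] (ρ : k[G] →+* B) (β : F →* G) (ψ : F →* A) (Φ : A →* B)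
    (h : Φ.comp ψ = (ρ.toMonoidHom.comp (of k G)).comp β) (u : k[F]) :
    ρ (mapDomain β u) = liftNC (ρ.toAddMonoidHom.comp (singleAddHom 1)) Φ (mapDomain ψ u) := by
  induction u using induction_linear with
  | zero => simp only [mapDomain_zero, map_zero]
  | add x y hx hy => simp only [mapDomain_add, map_add, hx, hy]
  | single x r =>
    rw [mapDomain_single, mapDomain_single, liftNC_single, ← MonoidHom.comp_apply Φ ψ, h,
      ← mul_one r, ← one_mul (β x), ← single_mul_single, mul_one, map_mul]
    rfl

end MonoidAlgebra

/-- over an integral domain `K` whose unit group `K×` is finite of order `m`,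
an element `u ∈ KF` is an identity of the representation `(K, K×)` (units acting on `K` by
multiplication) iff `u` is an identity of every representation `(V, G)` whose action
operators pairwise commute and in which every operator has order dividing `m`;
i.e. the variety `ω𝔄_m` is generated by `(K, K×)`. -/
theorem omegaAm_generated_by_units_representation
    (K : Type) [CommRing K] [IsDomain K] [Finite Kˣ] (m : ℕ) (hm : Nat.card Kˣ = m)
    (u : MonoidAlgebra K (FreeGroup ℕ)) :
    (∀ β : FreeGroup ℕ →* Kˣ, ∀ v : K,
        (MonoidAlgebra.lift K K (FreeGroup ℕ) ((Units.coeHom K).comp β)) u * v = 0) ↔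
    (∀ (G : Type) [Group G] (V : Type) [AddCommGroup V] [Module (MonoidAlgebra K G) V],
        (∀ (g h : G) (v : V),
            MonoidAlgebra.of K G g • (MonoidAlgebra.of K G h • v) =
              MonoidAlgebra.of K G h • (MonoidAlgebra.of K G g • v)) →
        (∀ (g : G) (v : V), MonoidAlgebra.of K G (g ^ m) • v = v) →
        ∀ β : FreeGroup ℕ →* G, ∀ v : V, (MonoidAlgebra.mapDomainAlgHom K K β u) • v = 0) := by
  have : NeZero m := ⟨hm ▸ Nat.card_pos.ne'⟩
  constructor
  · intro hL G _ V _ _ hcomm hpow β v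
    have hu : mapDomain (FreeGroup.toFinsuppZMod m) u = 0 :=
      eq_zero_of_forall_lift_eq_zero_s17 hm _ fun χ => by
        simpa [← lift_comp_mapDomainAlgHom] using hL (χ.comp (FreeGroup.toFinsuppZMod m)) 1
    let ρ := Module.toAddMonoidEnd (MonoidAlgebra K G) V
    obtain ⟨Φ, hΦ⟩ :=
      FreeGroup.exists_comp_toFinsuppZMod_eq m ((ρ.toMonoidHom.comp (of K G)).comp β)
      (fun x y => AddMonoidHom.ext (hcomm (β x) (β y)))
      (fun x => by rw [← map_pow]; ext w; rw [MonoidHom.comp_apply, map_pow]; exact hpow (β x) w)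
    show ρ (mapDomain β u) v = 0
    rw [map_mapDomain_eq_liftNC_mapDomain ρ β _ Φ hΦ, hu, map_zero]
    rfl
  · intro hR β v
    let : Module (MonoidAlgebra K Kˣ) K :=
      Module.compHom K (lift K K Kˣ (Units.coeHom K)).toRingHom
    have hsmul (x : MonoidAlgebra K Kˣ) (w : K) : x • w = lift K K Kˣ (Units.coeHom K) x * w := rfl
    have hK := hR Kˣ K (fun g h w => by simp only [hsmul, lift_of]; exact mul_left_comm _ _ _)
      (fun g w => by rw [hsmul, lift_of, ← hm, pow_card_eq_one', map_one, one_mul]) β v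
    rwa [← lift_comp_mapDomainAlgHom, AlgHom.comp_apply, ← hsmul]
end

section
/- Let K be a field, n ≥ 1, and G a group. Let I_Σ(KG) be the two-sided ideal of KG generated by all products (a₁b₁−b₁a₁)(a₂b₂−b₂a₂)⋯(aₙbₙ−bₙaₙ) with a₁,b₁,…,aₙ,bₙ ∈ KG, and let D_Σ(G) = {g ∈ G : g − 1 ∈ I_Σ(KG)} (a normal subgroup of G). Then the quotient group G/D_Σ(G) belongs to the variety 𝔑_{n−1}·𝔄: the derived subgroup of G/D_Σ(G) is nilpotent of nilpotency class at most n−1 (equivalently, G/D_Σ(G) has a normal subgroup that is nilpotent of class at most n−1 with abelian quotient). -/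
/-!
Write `I_k` for the verbal ideal of class `k` and `D_k = {g | g - 1 ∈ I_k}`. In any ring,
`⁅g, h⁆ - 1 = ((g - 1)(h - 1) - (h - 1)(g - 1)) (hg)⁻¹`, so `G' ≤ D_1`, and
`⁅D_k, D_1⁆ ≤ D_(k+1)` as soon as `I_k I_1 + I_1 I_k ⊆ I_(k+1)`; the latter holds because a
bracket can be moved past any element. Hence the `j`-th term of the lower central series of `G'`
lies in `D_(j+1)`, and the one of index `n - 1` dies in `G ⧸ D_n`.
-/

open scoped commutatorElement

section DimensionSubgroup

variable {G A : Type*} [Group G] [Ring A]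

def dimensionSubgroup (f : G →* A) (I : TwoSidedIdeal A) : Subgroup G :=
  (I.ringCon.mk'.toMonoidHom.comp f).ker

variable {f : G →* A} {I J L : TwoSidedIdeal A}

theorem mem_dimensionSubgroup {g : G} : g ∈ dimensionSubgroup f I ↔ f g - 1 ∈ I := by
  rw [dimensionSubgroup, MonoidHom.mem_ker]
  exact I.ringCon.eq.trans (I.rel_iff _ _)

instance dimensionSubgroup_normal : (dimensionSubgroup f I).Normal :=
  MonoidHom.normal_ker _

theorem dimensionSubgroup_top : dimensionSubgroup f ⊤ = ⊤ :=
  eq_top_iff.mpr fun _ _ => mem_dimensionSubgroup.mpr trivial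

theorem map_commutatorElement_sub_one (f : G →* A) (g h : G) :
    f ⁅g, h⁆ - 1 = ((f g - 1) * (f h - 1) - (f h - 1) * (f g - 1)) * f (h * g)⁻¹ := by
  have hcomm : (f g - 1) * (f h - 1) - (f h - 1) * (f g - 1) = f (g * h) - f (h * g) := by
    simp only [map_mul]; noncomm_ring
  rw [hcomm, sub_mul, ← map_mul, ← map_mul, mul_inv_cancel, map_one, commutatorElement_def,
    mul_inv_rev, mul_assoc, mul_assoc]

theorem commutator_dimensionSubgroup_le (h : ∀ x ∈ I, ∀ y ∈ J, x * y - y * x ∈ L) :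
    ⁅dimensionSubgroup f I, dimensionSubgroup f J⁆ ≤ dimensionSubgroup f L := by
  rw [Subgroup.commutator_le]
  intro g hg h' hh
  rw [mem_dimensionSubgroup] at hg hh ⊢
  rw [map_commutatorElement_sub_one]
  exact L.mul_mem_right _ _ (h _ hg _ hh)

end DimensionSubgroup

theorem Submodule.mul_mem_of_forall_mul_mem {R A : Type*} [CommSemiring R] [Semiring A]
    [Algebra R A] {S T : Set A} {P : Submodule R A} (h : ∀ s ∈ S, ∀ t ∈ T, s * t ∈ P)
    {x y : A} (hx : x ∈ span R S) (hy : y ∈ span R T) : x * y ∈ P := by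
  have hxy := Submodule.mul_mem_mul hx hy
  rw [Submodule.span_mul_span] at hxy
  exact Submodule.span_le.mpr (Set.mul_subset_iff.mpr h) hxy

section VerbalIdeal

variable {R A : Type*} [CommRing R] [Ring A] [Algebra R A]

def bracketProd {k : ℕ} (a b : Fin k → A) : A :=
  (List.ofFn fun i => a i * b i - b i * a i).prod

theorem bracketProd_cons {k : ℕ} (x y : A) (a b : Fin k → A) :
    bracketProd (Fin.cons x a) (Fin.cons y b) = (x * y - y * x) * bracketProd a b := by
  simp [bracketProd, List.ofFn_succ]

theorem bracketProd_snoc {k : ℕ} (a b : Fin k → A) (x y : A) :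
    bracketProd (Fin.snoc a x) (Fin.snoc b y) = bracketProd a b * (x * y - y * x) := by
  rw [bracketProd, List.ofFn_succ', List.prod_concat]
  simp [bracketProd]

theorem bracketProd_fin_one (a b : Fin 1 → A) : bracketProd a b = a 0 * b 0 - b 0 * a 0 := by
  simp [bracketProd]

variable (R A)

def verbalSubmodule (k : ℕ) : Submodule R A :=
  Submodule.span R {x | ∃ a b : Fin k → A, ∃ c d : A, x = c * bracketProd a b * d}

variable {R A}

theorem mul_bracketProd_mul_mem_verbalSubmodule {k : ℕ} (a b : Fin k → A) (c d : A) :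
    c * bracketProd a b * d ∈ verbalSubmodule R A k :=
  Submodule.subset_span ⟨a, b, c, d, rfl⟩

theorem mul_mem_verbalSubmodule_left {k : ℕ} (z : A) {x : A} (hx : x ∈ verbalSubmodule R A k) :
    z * x ∈ verbalSubmodule R A k := by
  refine Submodule.mul_mem_of_forall_mul_mem (S := Set.univ) ?_
    (Submodule.subset_span (Set.mem_univ z)) hx
  rintro z - _ ⟨a, b, c, d, rfl⟩
  simpa only [mul_assoc] using mul_bracketProd_mul_mem_verbalSubmodule a b (z * c) d

theorem mul_mem_verbalSubmodule_right {k : ℕ} (z : A) {x : A} (hx : x ∈ verbalSubmodule R A k) :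
    x * z ∈ verbalSubmodule R A k := by
  refine Submodule.mul_mem_of_forall_mul_mem (T := Set.univ) ?_ hx
    (Submodule.subset_span (Set.mem_univ z))
  rintro _ ⟨a, b, c, d, rfl⟩ z -
  simpa only [mul_assoc] using mul_bracketProd_mul_mem_verbalSubmodule a b c (d * z)

variable (R A)

def verbalIdeal (k : ℕ) : TwoSidedIdeal A :=
  .mk' (verbalSubmodule R A k) (zero_mem _) add_mem neg_mem (mul_mem_verbalSubmodule_left _)
    (mul_mem_verbalSubmodule_right _)

variable {R A}

theorem mem_verbalIdeal {k : ℕ} {x : A} :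
    x ∈ verbalIdeal R A k ↔ x ∈ verbalSubmodule R A k :=
  TwoSidedIdeal.mem_mk' ..

variable (R) in
theorem commutator_mem_verbalIdeal_one (x y : A) : x * y - y * x ∈ verbalIdeal R A 1 := by
  rw [mem_verbalIdeal]
  simpa [bracketProd_fin_one] using
    mul_bracketProd_mul_mem_verbalSubmodule (R := R) ![x] ![y] 1 1

theorem mul_mem_verbalIdeal_succ {k : ℕ} {x y : A} (hx : x ∈ verbalIdeal R A k)
    (hy : y ∈ verbalIdeal R A 1) : x * y ∈ verbalIdeal R A (k + 1) := by
  rw [mem_verbalIdeal] at *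
  refine Submodule.mul_mem_of_forall_mul_mem ?_ hx hy
  rintro _ ⟨a, b, c, d, rfl⟩ _ ⟨a', b', c', d', rfl⟩
  set z := d * c'
  rw [bracketProd_fin_one]
  -- `z [u, v] = [z u, v] - [z, v] u`
  have key : c * bracketProd a b * d * (c' * (a' 0 * b' 0 - b' 0 * a' 0) * d')
      = c * bracketProd (Fin.snoc a (z * a' 0)) (Fin.snoc b (b' 0)) * d'
        - c * bracketProd (Fin.snoc a z) (Fin.snoc b (b' 0)) * (a' 0 * d') := by
    simp only [bracketProd_snoc, z]; noncomm_ring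
  rw [key]
  exact sub_mem (mul_bracketProd_mul_mem_verbalSubmodule _ _ _ _)
    (mul_bracketProd_mul_mem_verbalSubmodule _ _ _ _)

theorem mul_mem_verbalIdeal_succ' {k : ℕ} {x y : A} (hx : x ∈ verbalIdeal R A 1)
    (hy : y ∈ verbalIdeal R A k) : x * y ∈ verbalIdeal R A (k + 1) := by
  rw [mem_verbalIdeal] at *
  refine Submodule.mul_mem_of_forall_mul_mem ?_ hx hy
  rintro _ ⟨a, b, c, d, rfl⟩ _ ⟨a', b', c', d', rfl⟩
  set z := d * c'
  rw [bracketProd_fin_one]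
  -- `[u, v] z = [u, v z] - v [u, z]`
  have key : c * (a 0 * b 0 - b 0 * a 0) * d * (c' * bracketProd a' b' * d')
      = c * bracketProd (Fin.cons (a 0) a') (Fin.cons (b 0 * z) b') * d'
        - c * b 0 * bracketProd (Fin.cons (a 0) a') (Fin.cons z b') * d' := by
    simp only [bracketProd_cons, z]; noncomm_ring
  rw [key]
  exact sub_mem (mul_bracketProd_mul_mem_verbalSubmodule _ _ _ _)
    (mul_bracketProd_mul_mem_verbalSubmodule _ _ _ _)

theorem commutator_mem_verbalIdeal_succ {k : ℕ} {x y : A} (hx : x ∈ verbalIdeal R A k)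
    (hy : y ∈ verbalIdeal R A 1) : x * y - y * x ∈ verbalIdeal R A (k + 1) :=
  sub_mem (mul_mem_verbalIdeal_succ hx hy) (mul_mem_verbalIdeal_succ' hy hx)

end VerbalIdeal

section LowerCentralSeries

variable {G : Type*} [Group G]

theorem lowerCentralSeries_commutator_le {N : ℕ → Subgroup G} (h₁ : commutator G ≤ N 1)
    (hN : ∀ k, ⁅N (k + 1), N 1⁆ ≤ N (k + 2)) (j : ℕ) :
    (commutator G).lowerCentralSeries j ≤ N (j + 1) := by
  induction j with
  | zero => exact h₁
  | succ j ih => exact (Subgroup.commutator_mono ih h₁).trans (hN j)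

theorem lowerCentralSeries_commutator_quotient_eq_bot (N : Subgroup G) [N.Normal] {j : ℕ}
    (h : (commutator G).lowerCentralSeries j ≤ N) :
    (⊤ : Subgroup (commutator (G ⧸ N))).lowerCentralSeries j = ⊥ := by
  have hcomm : commutator (G ⧸ N) = (commutator G).map (QuotientGroup.mk' N) := by
    rw [map_commutator_eq, MonoidHom.range_eq_top.mpr (QuotientGroup.mk'_surjective N),
      commutator_def]
  rw [← (Subgroup.map_injective (commutator (G ⧸ N)).subtype_injective).eq_iff,
    Subgroup.map_bot, Subgroup.top_subtype_lowerCentralSeries, hcomm,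
    ← Subgroup.map_lowerCentralSeries, Subgroup.map_eq_bot_iff, QuotientGroup.ker_mk']
  exact h

end LowerCentralSeries

theorem lowerCentralSeries_commutator_le_dimensionSubgroup (R : Type*) {G A : Type*}
    [CommRing R] [Group G] [Ring A] [Algebra R A] (f : G →* A) (j : ℕ) :
    (commutator G).lowerCentralSeries j ≤ dimensionSubgroup f (verbalIdeal R A (j + 1)) := by
  refine lowerCentralSeries_commutator_le (N := fun k => dimensionSubgroup f (verbalIdeal R A k))
    ?_ (fun k => commutator_dimensionSubgroup_le fun _ hx _ hy =>
      commutator_mem_verbalIdeal_succ hx hy) j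
  rw [commutator_def, ← dimensionSubgroup_top (f := f)]
  exact commutator_dimensionSubgroup_le fun x _ y _ => commutator_mem_verbalIdeal_one R x y

/-- let `K` be a field, `n ≥ 1`, `G` a group, `I_Σ(KG)` the two-sided ideal
of `KG` generated by all products `(a₁b₁-b₁a₁)⋯(aₙbₙ-bₙaₙ)` (the verbal ideal of the
variety `Σ` of algebras with nilpotent derived ideal of class `n`), and
`D_Σ(G) = {g : g - 1 ∈ I_Σ(KG)}` the corresponding dimension subgroup. Then `D_Σ(G)` is a
normal subgroup and `G/D_Σ(G)` lies in `𝔑_{n-1}·𝔄`: its derived subgroup is nilpotent of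
class at most `n - 1`. -/
theorem quotient_by_dimension_subgroup_in_NA (K : Type) [Field K] (n : ℕ) (hn : 1 ≤ n)
    (G : Type) [Group G] :
    let ISigma : Submodule K (MonoidAlgebra K G) := Submodule.span K
      {x : MonoidAlgebra K G | ∃ a b : Fin n → MonoidAlgebra K G, ∃ c d : MonoidAlgebra K G,
        x = c * (List.ofFn fun i => a i * b i - b i * a i).prod * d}
    ∃ D : Subgroup G, (∀ g : G, g ∈ D ↔ MonoidAlgebra.of K G g - 1 ∈ ISigma) ∧
      ∃ hD : D.Normal,
        letI := hD
        Subgroup.lowerCentralSeries (⊤ : Subgroup ↥(commutator (G ⧸ D))) (n - 1) = ⊥ := by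
  intro ISigma
  set D := dimensionSubgroup (MonoidAlgebra.of K G) (verbalIdeal K (MonoidAlgebra K G) n)
  refine ⟨D, fun g => mem_dimensionSubgroup.trans mem_verbalIdeal, inferInstance, ?_⟩
  apply lowerCentralSeries_commutator_quotient_eq_bot
  simpa only [Nat.sub_add_cancel hn] using
    lowerCentralSeries_commutator_le_dimensionSubgroup K (MonoidAlgebra.of K G) (n - 1)
end
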